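/- arXiv:0910.5451 — 7 statements merged into one kernel-verified Lean document; each statement's English description precedes it below -/
import Mathlib

section
/- Let N ≥ 1 and let f : B^N → B^N be holomorphic. Assume there exist p ∈ ∂B^N and c ∈ (0,1) such that f(H(p,R)) ⊆ H(p,cR) for every R > 0 (Julia's lemma at the Denjoy-Wolff point p with multiplier c, hyperbolic case). Let {Z_n}_{n≥0} be a backward-iteration sequence for f and a ∈ (0,1) a constant with d(Z_n, Z_{n+1}) ≤ a for all n. Then there exists a point q ∈ ∂B^N with q ≠ p such that Z_n → q in ℂ^N as n → ∞. -/
noncomputable section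

open Filter Topology

/-- The open unit ball `B^N = {Z ∈ ℂ^N : ‖Z‖ < 1}`. -/
def unitBall (N : ℕ) : Set (EuclideanSpace ℂ (Fin N)) := {Z | ‖Z‖ < 1}

/-- The Hermitian inner product `⟨Z,W⟩ = Σ_j Z_j * conj (W_j)` of the paper
(which is `inner W Z` in Mathlib's conjugate-linear-in-the-first-slot convention). -/
def hip {N : ℕ} (Z W : EuclideanSpace ℂ (Fin N)) : ℂ := inner ℂ W Z

/-- The pseudo-hyperbolic distance on the unit ball `B^N`:
the number `d(Z,W) ∈ [0,1)` with `d(Z,W)² = 1 − (1−‖Z‖²)(1−‖W‖²)/|1−⟨Z,W⟩|²`. -/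
def phd {N : ℕ} (Z W : EuclideanSpace ℂ (Fin N)) : ℝ :=
  Real.sqrt (1 - (1 - ‖Z‖ ^ 2) * (1 - ‖W‖ ^ 2) / ‖(1 : ℂ) - hip Z W‖ ^ 2)

/-- The horosphere `H(X,R) = {Z ∈ B^N : |1−⟨Z,X⟩|² < R(1−‖Z‖²)}`. -/
def horo {N : ℕ} (X : EuclideanSpace ℂ (Fin N)) (R : ℝ) :
    Set (EuclideanSpace ℂ (Fin N)) :=
  {Z | ‖Z‖ < 1 ∧ ‖(1 : ℂ) - hip Z X‖ ^ 2 < R * (1 - ‖Z‖ ^ 2)}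

/-- The Koranyi region `K(q,M) = {Z ∈ B^N : |1−⟨Z,q⟩| < M(1−‖Z‖)}`. -/
def koranyi {N : ℕ} (q : EuclideanSpace ℂ (Fin N)) (M : ℝ) :
    Set (EuclideanSpace ℂ (Fin N)) :=
  {Z | ‖Z‖ < 1 ∧ ‖(1 : ℂ) - hip Z q‖ < M * (1 - ‖Z‖)}

/-! Julia's condition makes the horospheric radius `|1 - ⟨Z, p⟩|² / (1 - ‖Z‖²)` grow at least
like `c⁻ⁿ` along the backward orbit, so `1 - ‖Zₙ‖² ≲ cⁿ |1 - ⟨Zₙ, p⟩|²`. With the bounded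
pseudo-hyperbolic steps this gives `‖Zₙ - Zₙ₊₁‖² ≲ cⁿ |1 - ⟨Zₙ, p⟩| |1 - ⟨Zₙ₊₁, p⟩|`. Hence the
orbit is Cauchy with limit on the sphere, and consecutive values of `|1 - ⟨Zₙ, p⟩|` have ratios
`1 + O(cⁿᐟ²)`, whose product converges, so `|1 - ⟨Zₙ, p⟩|` stays bounded away from `0`. -/

section BallInequalities

variable {N : ℕ}

lemma norm_hip_le (Z W : EuclideanSpace ℂ (Fin N)) : ‖hip Z W‖ ≤ ‖Z‖ * ‖W‖ := by
  rw [hip, mul_comm]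
  exact norm_inner_le_norm W Z

lemma one_sub_mul_norm_le_norm_one_sub_hip (Z W : EuclideanSpace ℂ (Fin N)) :
    1 - ‖Z‖ * ‖W‖ ≤ ‖(1 : ℂ) - hip Z W‖ := by
  have h := norm_sub_norm_le (1 : ℂ) (hip Z W)
  rw [norm_one] at h
  linarith [norm_hip_le Z W]

lemma norm_one_sub_hip_le_two {Z W : EuclideanSpace ℂ (Fin N)} (hZ : ‖Z‖ ≤ 1) (hW : ‖W‖ ≤ 1) :
    ‖(1 : ℂ) - hip Z W‖ ≤ 2 := by
  have h := norm_sub_le (1 : ℂ) (hip Z W)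
  rw [norm_one] at h
  linarith [norm_hip_le Z W, mul_le_one₀ hZ (norm_nonneg W) hW]

lemma sq_norm_sub_le_two_mul_norm_one_sub_hip {Z W : EuclideanSpace ℂ (Fin N)}
    (hZ : ‖Z‖ ≤ 1) (hW : ‖W‖ ≤ 1) : ‖Z - W‖ ^ 2 ≤ 2 * ‖(1 : ℂ) - hip Z W‖ := by
  have hre : (hip Z W).re = (inner ℂ Z W).re := by
    rw [hip, ← inner_conj_symm, Complex.conj_re]
  have h := Complex.re_le_norm ((1 : ℂ) - hip Z W)
  rw [Complex.sub_re, Complex.one_re, hre] at h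
  have hre' : RCLike.re (inner ℂ Z W) = (inner ℂ Z W).re := rfl
  rw [@norm_sub_sq ℂ, hre']
  nlinarith [norm_nonneg Z, norm_nonneg W]

lemma abs_norm_one_sub_hip_sub_le (Z W X : EuclideanSpace ℂ (Fin N)) :
    |‖(1 : ℂ) - hip Z X‖ - ‖(1 : ℂ) - hip W X‖| ≤ ‖W - Z‖ * ‖X‖ := by
  have hdiff : ((1 : ℂ) - hip Z X) - ((1 : ℂ) - hip W X) = hip (W - Z) X := by
    simp only [hip, inner_sub_right]
    ring
  calc _ ≤ ‖((1 : ℂ) - hip Z X) - ((1 : ℂ) - hip W X)‖ := abs_norm_sub_norm_le _ _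
    _ ≤ ‖W - Z‖ * ‖X‖ := hdiff ▸ norm_hip_le _ _

lemma sq_norm_one_sub_hip_le_of_phd_le {Z W : EuclideanSpace ℂ (Fin N)} {a : ℝ} (ha : a < 1)
    (h : phd Z W ≤ a) :
    (1 - a ^ 2) * ‖(1 : ℂ) - hip Z W‖ ^ 2 ≤ (1 - ‖Z‖ ^ 2) * (1 - ‖W‖ ^ 2) := by
  set s := ‖(1 : ℂ) - hip Z W‖
  set q := (1 - ‖Z‖ ^ 2) * (1 - ‖W‖ ^ 2) / s ^ 2
  have hphd : phd Z W = Real.sqrt (1 - q) := rfl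
  have hq : 0 < q := by
    by_contra! hq
    have : 1 ≤ phd Z W := by
      rw [hphd, Real.one_le_sqrt]
      linarith
    linarith
  have hs : 0 < s ^ 2 := by
    rcases (sq_nonneg s).lt_or_eq with hs | hs
    · exact hs
    · simp [q, ← hs] at hq
  have hbound : 1 - a ^ 2 ≤ q := by
    rcases le_total q 1 with hq1 | hq1
    · have := pow_le_pow_left₀ (Real.sqrt_nonneg _) (hphd ▸ h) 2
      rw [Real.sq_sqrt (by linarith)] at this
      linarith
    · nlinarith [sq_nonneg a]
  calc (1 - a ^ 2) * s ^ 2 ≤ q * s ^ 2 := by gcongr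
    _ = _ := div_mul_cancel₀ _ hs.ne'

end BallInequalities

section Horospheres

variable {N : ℕ}

def horoRadius (X Z : EuclideanSpace ℂ (Fin N)) : ℝ :=
  ‖(1 : ℂ) - hip Z X‖ ^ 2 / (1 - ‖Z‖ ^ 2)

lemma one_sub_sq_norm_pos {Z : EuclideanSpace ℂ (Fin N)} (hZ : ‖Z‖ < 1) : 0 < 1 - ‖Z‖ ^ 2 := by
  nlinarith [norm_nonneg Z]

lemma horoRadius_nonneg {X Z : EuclideanSpace ℂ (Fin N)} (hZ : ‖Z‖ < 1) :
    0 ≤ horoRadius X Z :=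
  div_nonneg (sq_nonneg _) (one_sub_sq_norm_pos hZ).le

lemma horoRadius_pos {X Z : EuclideanSpace ℂ (Fin N)} (hX : ‖X‖ = 1) (hZ : ‖Z‖ < 1) :
    0 < horoRadius X Z := by
  have h := one_sub_mul_norm_le_norm_one_sub_hip Z X
  rw [hX, mul_one] at h
  exact div_pos (pow_pos (by linarith) 2) (one_sub_sq_norm_pos hZ)

lemma mem_horo_iff {X Z : EuclideanSpace ℂ (Fin N)} {R : ℝ} (hZ : ‖Z‖ < 1) :
    Z ∈ horo X R ↔ horoRadius X Z < R := by
  rw [horoRadius, div_lt_iff₀ (one_sub_sq_norm_pos hZ)]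
  exact and_iff_right hZ

lemma horoRadius_apply_le {f : EuclideanSpace ℂ (Fin N) → EuclideanSpace ℂ (Fin N)}
    {p W : EuclideanSpace ℂ (Fin N)} {c : ℝ} (hc : 0 < c)
    (hJulia : ∀ R : ℝ, 0 < R → f '' horo p R ⊆ horo p (c * R)) (hW : ‖W‖ < 1) :
    horoRadius p (f W) ≤ c * horoRadius p W := by
  refine le_of_forall_gt fun t ht => ?_
  have hR : horoRadius p W < t / c := by rwa [lt_div_iff₀ hc, mul_comm]
  have himg := hJulia (t / c) ((horoRadius_nonneg hW).trans_lt hR) ⟨W, (mem_horo_iff hW).2 hR, rfl⟩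
  rw [mem_horo_iff himg.1, mul_div_cancel₀ _ hc.ne'] at himg
  exact himg

end Horospheres

lemma le_mul_one_add_sq_of_sq_sub_le {x y ε : ℝ} (hx : 0 ≤ x) (hy : 0 ≤ y) (hε : 0 ≤ ε)
    (h : (x - y) ^ 2 ≤ ε ^ 2 * (x * y)) : x ≤ (1 + ε) ^ 2 * y := by
  rcases le_total x y with hxy | hxy
  · nlinarith
  obtain ⟨s, hs, rfl⟩ : ∃ s, 0 ≤ s ∧ s ^ 2 = x := ⟨√x, Real.sqrt_nonneg x, Real.sq_sqrt hx⟩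
  obtain ⟨t, ht, rfl⟩ : ∃ t, 0 ≤ t ∧ t ^ 2 = y := ⟨√y, Real.sqrt_nonneg y, Real.sq_sqrt hy⟩
  have hts : t ≤ s := (pow_le_pow_iff_left₀ ht hs two_ne_zero).1 hxy
  have hdiff : s ^ 2 - t ^ 2 ≤ ε * s * t :=
    (pow_le_pow_iff_left₀ (by nlinarith) (by positivity) two_ne_zero).1 (by nlinarith)
  have h' : (s - t) * (s + t) ≤ ε * t * (s + t) := by
    nlinarith [mul_nonneg (mul_nonneg hε ht) (sub_nonneg.2 hts)]
  rcases (add_nonneg hs ht).lt_or_eq with hst | hst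
  · have := le_of_mul_le_mul_right h' hst
    nlinarith
  · nlinarith

lemma mul_exp_neg_tsum_le {x e : ℕ → ℝ} (hx : ∀ n, 0 ≤ x n) (he : ∀ n, 0 ≤ e n)
    (hsum : Summable e) (h : ∀ n, x n ≤ (1 + e n) * x (n + 1)) (n : ℕ) :
    x 0 * Real.exp (-∑' k, e k) ≤ x n := by
  suffices hpartial : ∀ n, x 0 * Real.exp (-∑ k ∈ Finset.range n, e k) ≤ x n by
    refine le_trans (mul_le_mul_of_nonneg_left ?_ (hx 0)) (hpartial n)
    exact Real.exp_le_exp.2 (neg_le_neg (hsum.sum_le_tsum _ fun k _ => he k))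
  intro n
  induction n with
  | zero => simp
  | succ n ih =>
    calc x 0 * Real.exp (-∑ k ∈ Finset.range (n + 1), e k)
        = x 0 * Real.exp (-∑ k ∈ Finset.range n, e k) * Real.exp (-e n) := by
          rw [Finset.sum_range_succ, neg_add, Real.exp_add, mul_assoc]
      _ ≤ x n * Real.exp (-e n) := by gcongr
      _ ≤ Real.exp (e n) * x (n + 1) * Real.exp (-e n) := by
          gcongr
          exact (h n).trans (by gcongr; exacts [hx _, by linarith [Real.add_one_le_exp (e n)]])
      _ = x (n + 1) := by
          rw [mul_comm, ← mul_assoc, ← Real.exp_add, neg_add_cancel, Real.exp_zero, one_mul]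

section BackwardOrbit

variable {N : ℕ} {p : EuclideanSpace ℂ (Fin N)} {c : ℝ} {Z : ℕ → EuclideanSpace ℂ (Fin N)}

lemma horoRadius_le_pow_mul {f : EuclideanSpace ℂ (Fin N) → EuclideanSpace ℂ (Fin N)} (hc : 0 < c)
    (hJulia : ∀ R : ℝ, 0 < R → f '' horo p R ⊆ horo p (c * R)) (hZ : ∀ n, ‖Z n‖ < 1)
    (hback : ∀ n, f (Z (n + 1)) = Z n) (n : ℕ) :
    horoRadius p (Z 0) ≤ c ^ n * horoRadius p (Z n) := by
  induction n with
  | zero => simp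
  | succ n ih =>
    calc horoRadius p (Z 0) ≤ c ^ n * horoRadius p (Z n) := ih
      _ ≤ c ^ n * (c * horoRadius p (Z (n + 1))) := by
          gcongr
          exact hback n ▸ horoRadius_apply_le hc hJulia (hZ (n + 1))
      _ = c ^ (n + 1) * horoRadius p (Z (n + 1)) := by ring

lemma horoRadius_mul_one_sub_sq_norm_le {f : EuclideanSpace ℂ (Fin N) → EuclideanSpace ℂ (Fin N)}
    (hc : 0 < c) (hJulia : ∀ R : ℝ, 0 < R → f '' horo p R ⊆ horo p (c * R))
    (hZ : ∀ n, ‖Z n‖ < 1) (hback : ∀ n, f (Z (n + 1)) = Z n) (n : ℕ) :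
    horoRadius p (Z 0) * (1 - ‖Z n‖ ^ 2) ≤ c ^ n * ‖(1 : ℂ) - hip (Z n) p‖ ^ 2 := by
  have hd := one_sub_sq_norm_pos (hZ n)
  calc horoRadius p (Z 0) * (1 - ‖Z n‖ ^ 2)
      ≤ c ^ n * horoRadius p (Z n) * (1 - ‖Z n‖ ^ 2) := by
        gcongr
        exact horoRadius_le_pow_mul hc hJulia hZ hback n
    _ = c ^ n * ‖(1 : ℂ) - hip (Z n) p‖ ^ 2 := by
        rw [horoRadius, mul_assoc, div_mul_cancel₀ _ hd.ne']

lemma sq_norm_sub_succ_le {a r : ℝ} (hc0 : 0 ≤ c) (hc1 : c ≤ 1) (hZ : ∀ n, ‖Z n‖ < 1)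
    (ha0 : 0 ≤ a) (ha1 : a < 1) (hstep : ∀ n, phd (Z n) (Z (n + 1)) ≤ a) (hr : 0 < r)
    (hdecay : ∀ n, r * (1 - ‖Z n‖ ^ 2) ≤ c ^ n * ‖(1 : ℂ) - hip (Z n) p‖ ^ 2) (n : ℕ) :
    ‖Z n - Z (n + 1)‖ ^ 2 ≤ 2 / (r * √(1 - a ^ 2)) * c ^ n *
      (‖(1 : ℂ) - hip (Z n) p‖ * ‖(1 : ℂ) - hip (Z (n + 1)) p‖) := by
  set v := ‖(1 : ℂ) - hip (Z n) p‖
  set v' := ‖(1 : ℂ) - hip (Z (n + 1)) p‖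
  set s := ‖(1 : ℂ) - hip (Z n) (Z (n + 1))‖
  have hb : 0 < √(1 - a ^ 2) := Real.sqrt_pos.2 (by nlinarith)
  have hd := (one_sub_sq_norm_pos (hZ n)).le
  have hd' := (one_sub_sq_norm_pos (hZ (n + 1))).le
  have hdecay' : r * (1 - ‖Z (n + 1)‖ ^ 2) ≤ c ^ n * v' ^ 2 :=
    (hdecay (n + 1)).trans
      (mul_le_mul_of_nonneg_right (pow_le_pow_of_le_one hc0 hc1 n.le_succ) (sq_nonneg v'))
  have hs : r * √(1 - a ^ 2) * s ≤ c ^ n * (v * v') := by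
    refine (pow_le_pow_iff_left₀ (by positivity) (by positivity) two_ne_zero).1 ?_
    calc (r * √(1 - a ^ 2) * s) ^ 2 = r ^ 2 * ((1 - a ^ 2) * s ^ 2) := by
          rw [mul_pow, mul_pow, Real.sq_sqrt (by nlinarith)]; ring
      _ ≤ r ^ 2 * ((1 - ‖Z n‖ ^ 2) * (1 - ‖Z (n + 1)‖ ^ 2)) :=
          mul_le_mul_of_nonneg_left (sq_norm_one_sub_hip_le_of_phd_le ha1 (hstep n)) (sq_nonneg r)
      _ = (r * (1 - ‖Z n‖ ^ 2)) * (r * (1 - ‖Z (n + 1)‖ ^ 2)) := by ring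
      _ ≤ (c ^ n * v ^ 2) * (c ^ n * v' ^ 2) :=
          mul_le_mul (hdecay n) hdecay' (by positivity) (by positivity)
      _ = (c ^ n * (v * v')) ^ 2 := by ring
  calc ‖Z n - Z (n + 1)‖ ^ 2 ≤ 2 * s :=
        sq_norm_sub_le_two_mul_norm_one_sub_hip (hZ n).le (hZ (n + 1)).le
    _ ≤ 2 / (r * √(1 - a ^ 2)) * c ^ n * (v * v') := by
        rw [div_mul_eq_mul_div, div_mul_eq_mul_div, le_div_iff₀ (by positivity)]
        nlinarith

lemma cauchySeq_of_sq_norm_sub_le {C : ℝ} (hC : 0 ≤ C) (hc0 : 0 ≤ c) (hc1 : c < 1)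
    (hp : ‖p‖ ≤ 1) (hZ : ∀ n, ‖Z n‖ < 1)
    (hΔ : ∀ n, ‖Z n - Z (n + 1)‖ ^ 2 ≤
      C * c ^ n * (‖(1 : ℂ) - hip (Z n) p‖ * ‖(1 : ℂ) - hip (Z (n + 1)) p‖)) :
    CauchySeq Z := by
  refine cauchySeq_of_le_geometric √c (2 * √C) ((Real.sqrt_lt' one_pos).2 (by rwa [one_pow]))
    fun n => ?_
  rw [dist_eq_norm]
  refine (pow_le_pow_iff_left₀ (norm_nonneg _) (by positivity) two_ne_zero).1 ?_
  have hv := norm_one_sub_hip_le_two (hZ n).le hp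
  have hv' := norm_one_sub_hip_le_two (hZ (n + 1)).le hp
  calc ‖Z n - Z (n + 1)‖ ^ 2
      ≤ C * c ^ n * (‖(1 : ℂ) - hip (Z n) p‖ * ‖(1 : ℂ) - hip (Z (n + 1)) p‖) := hΔ n
    _ ≤ C * c ^ n * (2 * 2) := by gcongr
    _ = (2 * √C * √c ^ n) ^ 2 := by
        rw [mul_pow, mul_pow, Real.sq_sqrt hC, pow_right_comm, Real.sq_sqrt hc0]; ring

lemma norm_eq_one_of_tendsto {r : ℝ} {q : EuclideanSpace ℂ (Fin N)} (hr : 0 < r) (hc0 : 0 ≤ c)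
    (hc1 : c < 1) (hp : ‖p‖ ≤ 1) (hZ : ∀ n, ‖Z n‖ < 1)
    (hdecay : ∀ n, r * (1 - ‖Z n‖ ^ 2) ≤ c ^ n * ‖(1 : ℂ) - hip (Z n) p‖ ^ 2)
    (hq : Tendsto Z atTop (𝓝 q)) : ‖q‖ = 1 := by
  have hbound : ∀ n, 1 - ‖Z n‖ ^ 2 ≤ 4 / r * c ^ n := fun n => by
    have hv := norm_one_sub_hip_le_two (hZ n).le hp
    have hv2 := mul_le_mul_of_nonneg_left (pow_le_pow_left₀ (norm_nonneg _) hv 2) (pow_nonneg hc0 n)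
    rw [div_mul_eq_mul_div, le_div_iff₀ hr, mul_comm]
    linarith [hdecay n]
  have hgeom : Tendsto (fun n => 4 / r * c ^ n) atTop (𝓝 0) := by
    simpa using (tendsto_pow_atTop_nhds_zero_of_lt_one hc0 hc1).const_mul (4 / r)
  have hlim := tendsto_nhds_unique (tendsto_const_nhds.sub (hq.norm.pow 2))
    (squeeze_zero (fun n => (one_sub_sq_norm_pos (hZ n)).le) hbound hgeom)
  rw [← pow_eq_one_iff_of_nonneg (norm_nonneg q) two_ne_zero]
  linarith

lemma norm_one_sub_hip_le_mul_succ {C : ℝ} (hC : 0 ≤ C) (hc0 : 0 ≤ c) (hp : ‖p‖ = 1)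
    (hΔ : ∀ n, ‖Z n - Z (n + 1)‖ ^ 2 ≤
      C * c ^ n * (‖(1 : ℂ) - hip (Z n) p‖ * ‖(1 : ℂ) - hip (Z (n + 1)) p‖)) (n : ℕ) :
    ‖(1 : ℂ) - hip (Z n) p‖ ≤ (1 + √C * √c ^ n) ^ 2 * ‖(1 : ℂ) - hip (Z (n + 1)) p‖ := by
  refine le_mul_one_add_sq_of_sq_sub_le (norm_nonneg _) (norm_nonneg _) (by positivity) ?_
  have hlip := abs_norm_one_sub_hip_sub_le (Z n) (Z (n + 1)) p
  rw [hp, mul_one] at hlip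
  calc _ = |‖(1 : ℂ) - hip (Z n) p‖ - ‖(1 : ℂ) - hip (Z (n + 1)) p‖| ^ 2 := (sq_abs _).symm
    _ ≤ ‖Z n - Z (n + 1)‖ ^ 2 := by rw [norm_sub_rev (Z n)]; gcongr
    _ ≤ _ := hΔ n
    _ = _ := by rw [mul_pow, Real.sq_sqrt hC, pow_right_comm, Real.sq_sqrt hc0]

lemma ne_of_tendsto_of_sq_norm_sub_le {C : ℝ} {q : EuclideanSpace ℂ (Fin N)} (hC : 0 ≤ C)
    (hc0 : 0 ≤ c) (hc1 : c < 1) (hp : ‖p‖ = 1) (hZ0 : ‖Z 0‖ < 1)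
    (hΔ : ∀ n, ‖Z n - Z (n + 1)‖ ^ 2 ≤
      C * c ^ n * (‖(1 : ℂ) - hip (Z n) p‖ * ‖(1 : ℂ) - hip (Z (n + 1)) p‖))
    (hq : Tendsto Z atTop (𝓝 q)) : q ≠ p := by
  set ε : ℕ → ℝ := fun n => √C * √c ^ n
  have hε : Summable ε := (summable_geometric_of_lt_one (Real.sqrt_nonneg c)
    ((Real.sqrt_lt' one_pos).2 (by rwa [one_pow]))).mul_left √C
  have hεsq : Summable fun n => ε n ^ 2 := by
    refine ((summable_geometric_of_lt_one hc0 hc1).mul_left C).congr fun n => ?_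
    rw [mul_pow, Real.sq_sqrt hC, pow_right_comm, Real.sq_sqrt hc0]
  have hlow := mul_exp_neg_tsum_le (fun _ => norm_nonneg _) (fun n => by positivity)
    ((hε.mul_left 2).add hεsq) fun n => by
      convert norm_one_sub_hip_le_mul_succ hC hc0 hp hΔ n using 2; ring
  have hv0 : 0 < ‖(1 : ℂ) - hip (Z 0) p‖ := by
    have := one_sub_mul_norm_le_norm_one_sub_hip (Z 0) p
    rw [hp, mul_one] at this
    linarith
  have hlim : Tendsto (fun n => ‖(1 : ℂ) - hip (Z n) p‖) atTop (𝓝 ‖(1 : ℂ) - hip q p‖) :=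
    (tendsto_const_nhds.sub (tendsto_const_nhds.inner hq)).norm
  have hpos : 0 < ‖(1 : ℂ) - hip q p‖ :=
    (mul_pos hv0 (Real.exp_pos _)).trans_le (ge_of_tendsto' hlim hlow)
  rintro rfl
  rw [hip, inner_self_eq_norm_sq_to_K, hp] at hpos
  norm_num at hpos

end BackwardOrbit

theorem stmt0_general {N : ℕ}
    (f : EuclideanSpace ℂ (Fin N) → EuclideanSpace ℂ (Fin N))
    (p : EuclideanSpace ℂ (Fin N)) (hp : ‖p‖ = 1)
    (c : ℝ) (hc0 : 0 < c) (hc1 : c < 1)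
    (hJulia : ∀ R : ℝ, 0 < R → f '' horo p R ⊆ horo p (c * R))
    (Z : ℕ → EuclideanSpace ℂ (Fin N)) (hZ : ∀ k, Z k ∈ unitBall N)
    (hback : ∀ k, f (Z (k + 1)) = Z k)
    (a : ℝ) (ha0 : 0 < a) (ha1 : a < 1)
    (hstep : ∀ k, phd (Z k) (Z (k + 1)) ≤ a) :
    ∃ q : EuclideanSpace ℂ (Fin N), ‖q‖ = 1 ∧ q ≠ p ∧ Tendsto Z atTop (𝓝 q) := by
  have hZ' : ∀ n, ‖Z n‖ < 1 := hZ
  have hr : 0 < horoRadius p (Z 0) := horoRadius_pos hp (hZ' 0)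
  have hdecay := horoRadius_mul_one_sub_sq_norm_le hc0 hJulia hZ' hback
  have hΔ := sq_norm_sub_succ_le hc0.le hc1.le hZ' ha0.le ha1 hstep hr hdecay
  obtain ⟨q, hq⟩ := cauchySeq_tendsto_of_complete
    (cauchySeq_of_sq_norm_sub_le (by positivity) hc0.le hc1 hp.le hZ' hΔ)
  exact ⟨q, norm_eq_one_of_tendsto hr hc0.le hc1 hp.le hZ' hdecay hq,
    ne_of_tendsto_of_sq_norm_sub_le (by positivity) hc0.le hc1 hp (hZ' 0) hΔ hq, hq⟩

/-- hyperbolic case. If `f : B^N → B^N` is holomorphic, satisfies Julia's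
lemma at a Denjoy-Wolff point `p ∈ ∂B^N` with multiplier `c ∈ (0,1)`, and `{Z_n}` is a
backward-iteration sequence for `f` with pseudo-hyperbolic steps bounded by `a < 1`,
then `Z_n` converges to some `q ∈ ∂B^N`, `q ≠ p`. -/
theorem stmt0 {N : ℕ} (hN : 1 ≤ N)
    (f : EuclideanSpace ℂ (Fin N) → EuclideanSpace ℂ (Fin N))
    (hmaps : Set.MapsTo f (unitBall N) (unitBall N))
    (hhol : DifferentiableOn ℂ f (unitBall N))
    (p : EuclideanSpace ℂ (Fin N)) (hp : ‖p‖ = 1)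
    (c : ℝ) (hc0 : 0 < c) (hc1 : c < 1)
    (hJulia : ∀ R : ℝ, 0 < R → f '' horo p R ⊆ horo p (c * R))
    (Z : ℕ → EuclideanSpace ℂ (Fin N)) (hZ : ∀ k, Z k ∈ unitBall N)
    (hback : ∀ k, f (Z (k + 1)) = Z k)
    (a : ℝ) (ha0 : 0 < a) (ha1 : a < 1)
    (hstep : ∀ k, phd (Z k) (Z (k + 1)) ≤ a) :
    ∃ q : EuclideanSpace ℂ (Fin N), ‖q‖ = 1 ∧ q ≠ p ∧ Tendsto Z atTop (𝓝 q) :=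
  stmt0_general f p hp c hc0 hc1 hJulia Z hZ hback a ha0 ha1 hstep
end
end

section
/- Let N ≥ 1 and let f : B^N → B^N be holomorphic with f(0) = 0, and assume f is not unitary on any slice: there do not exist ζ, η ∈ ∂B^N such that f(λζ) = λη for all λ in the unit disk 𝔻 ⊂ ℂ. For r ∈ (0,1) set M(r) = sup{‖f(Z)‖ : Z ∈ ℂ^N, ‖Z‖ < r}. Then for every r₀ ∈ (0,1) there exists c = c(r₀) < 1 such that 1 − r ≤ c·(1 − M(r)) for all r ∈ [r₀, 1). -/
noncomputable section

open Filter Topology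

/-!
Let `T = Df(0)`. Restricting `f` to the complex line through `Z` and composing with a norming
functional of `f Z` gives a self-map `g` of the disc with `g 0 = 0` and `|g'(0)| ≤ ‖T‖`; the
Schwarz–Pick lemma applied to `g(λ)/λ` yields `‖f Z‖ ≤ t (‖T‖ + t) / (1 + ‖T‖ t)` for `‖Z‖ = t`,
hence `1 - M(r) ≥ (1 - r²) / (1 + ‖T‖ r)`. In finite dimension `‖T‖` is attained at a unit
vector `ζ`, and if `‖T‖ = 1` the equality case of the Schwarz lemma makes the slice through `ζ`
linear, which the hypothesis excludes. So `‖T‖ < 1`, and `c = (1 + ‖T‖ r₀) / (1 + r₀)` works.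
-/

open Metric Set

def schwarzPickBound (a t : ℝ) : ℝ := (a + t) / (1 + a * t)

lemma schwarzPickBound_comm (a t : ℝ) : schwarzPickBound a t = schwarzPickBound t a := by
  unfold schwarzPickBound; ring

lemma schwarzPickBound_one_left {t : ℝ} (ht : 0 ≤ t) : schwarzPickBound 1 t = 1 := by
  unfold schwarzPickBound; rw [one_mul, add_comm]; exact div_self (by positivity)

lemma schwarzPickBound_nonneg {a t : ℝ} (ha : 0 ≤ a) (ht : 0 ≤ t) :
    0 ≤ schwarzPickBound a t := by
  unfold schwarzPickBound; positivity

lemma le_schwarzPickBound_iff {a t x : ℝ} (ha : 0 ≤ a) (ht : 0 ≤ t) :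
    x ≤ schwarzPickBound a t ↔ x * (1 + a * t) ≤ a + t :=
  le_div_iff₀ (by positivity)

lemma schwarzPickBound_mono_left {a b t : ℝ} (ha : 0 ≤ a) (hab : a ≤ b) (ht : 0 ≤ t)
    (ht1 : t ≤ 1) : schwarzPickBound a t ≤ schwarzPickBound b t := by
  unfold schwarzPickBound
  rw [div_le_div_iff₀ (by positivity) (by nlinarith)]
  nlinarith [mul_nonneg (sub_nonneg.2 hab)
    (mul_nonneg (sub_nonneg.2 ht1) (by linarith : (0 : ℝ) ≤ 1 + t))]

lemma schwarzPickBound_mono_right {a s t : ℝ} (ha : 0 ≤ a) (ha1 : a ≤ 1) (hs : 0 ≤ s)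
    (hst : s ≤ t) : schwarzPickBound a s ≤ schwarzPickBound a t := by
  rw [schwarzPickBound_comm a, schwarzPickBound_comm a]
  exact schwarzPickBound_mono_left hs hst ha ha1

lemma mul_schwarzPickBound_mono_right {a s t : ℝ} (ha : 0 ≤ a) (ha1 : a ≤ 1) (hs : 0 ≤ s)
    (hst : s ≤ t) : s * schwarzPickBound a s ≤ t * schwarzPickBound a t :=
  mul_le_mul hst (schwarzPickBound_mono_right ha ha1 hs hst) (schwarzPickBound_nonneg ha hs)
    (hs.trans hst)

lemma one_sub_le_mul_one_sub_of_le_mul_schwarzPickBound {m r₀ r M : ℝ} (hm : 0 ≤ m)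
    (hm1 : m < 1) (hr₀ : 0 < r₀) (hr₀r : r₀ ≤ r) (hr1 : r < 1)
    (hM : M ≤ r * schwarzPickBound m r) :
    1 - r ≤ (1 + m * r₀) / (1 + r₀) * (1 - M) := by
  have hr : 0 < r := hr₀.trans_le hr₀r
  have hden : 0 < 1 + m * r := by positivity
  have hgap : (1 - r) * (1 + r) / (1 + m * r) ≤ 1 - M := by
    have : r * schwarzPickBound m r = 1 - (1 - r) * (1 + r) / (1 + m * r) := by
      unfold schwarzPickBound; field_simp; ring
    linarith
  calc 1 - r ≤ (1 + m * r₀) / (1 + r₀) * ((1 - r) * (1 + r) / (1 + m * r)) := by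
        rw [div_mul_div_comm, le_div_iff₀ (by positivity)]
        nlinarith [mul_nonneg (mul_nonneg (sub_nonneg.2 hr₀r) (sub_nonneg.2 hm1.le))
          (sub_nonneg.2 hr1.le)]
    _ ≤ (1 + m * r₀) / (1 + r₀) * (1 - M) := by gcongr

namespace Complex

open ComplexConjugate

lemma sq_norm_one_sub_conj_mul (a v : ℂ) :
    ‖1 - conj a * v‖ ^ 2 = ‖v - a‖ ^ 2 + (1 - ‖a‖ ^ 2) * (1 - ‖v‖ ^ 2) := by
  simp only [Complex.sq_norm, normSq_apply, sub_re, sub_im, mul_re, mul_im, conj_re, conj_im,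
    one_re, one_im]
  ring

lemma norm_sub_le_norm_one_sub_conj_mul {a v : ℂ} (ha : ‖a‖ ≤ 1) (hv : ‖v‖ ≤ 1) :
    ‖v - a‖ ≤ ‖1 - conj a * v‖ := by
  have : 0 ≤ (1 - ‖a‖ ^ 2) * (1 - ‖v‖ ^ 2) := by
    apply mul_nonneg <;> nlinarith [norm_nonneg a, norm_nonneg v]
  refine (pow_le_pow_iff_left₀ (norm_nonneg _) (norm_nonneg _) two_ne_zero).1 ?_
  rw [sq_norm_one_sub_conj_mul]
  linarith

lemma norm_le_schwarzPickBound_of_norm_sub_le {a v : ℂ} {t : ℝ} (ha : ‖a‖ < 1) (ht : 0 ≤ t)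
    (ht1 : t < 1) (h : ‖v - a‖ ≤ t * ‖1 - conj a * v‖) : ‖v‖ ≤ schwarzPickBound ‖a‖ t := by
  set x := ‖v‖
  set α := ‖a‖
  have hα : 0 ≤ α := norm_nonneg a
  have hx : 0 ≤ x := norm_nonneg v
  have hsq : ‖v - a‖ ^ 2 ≤ t ^ 2 * (‖v - a‖ ^ 2 + (1 - α ^ 2) * (1 - x ^ 2)) := by
    rw [← sq_norm_one_sub_conj_mul, ← mul_pow]
    exact pow_le_pow_left₀ (norm_nonneg _) h 2
  have hdist : (x - α) ^ 2 ≤ ‖v - a‖ ^ 2 := by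
    rw [← sq_abs]; exact pow_le_pow_left₀ (abs_nonneg _) (abs_norm_sub_norm_le v a) 2
  -- `hsq` and `hdist` place `x` between the roots `(α - t)/(1 - αt)` and `(α + t)/(1 + αt)`
  have hquad : ((1 + α * t) * x - (α + t)) * ((1 - α * t) * x - (α - t)) ≤ 0 := by
    nlinarith [mul_le_mul_of_nonneg_left hdist (by nlinarith : (0 : ℝ) ≤ 1 - t ^ 2)]
  rw [le_schwarzPickBound_iff hα ht]
  by_contra! hx'
  have hαt : 0 < 1 - α * t := by nlinarith
  have hsecond : 0 < (1 - α * t) * x - (α - t) := by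
    have : 0 < (1 + α * t) * ((1 - α * t) * x - (α - t)) := by
      nlinarith [mul_pos hαt (sub_pos.2 hx'), mul_nonneg ht (by nlinarith : (0 : ℝ) ≤ 1 - α ^ 2)]
    exact pos_of_mul_pos_right this (by positivity)
  nlinarith [mul_pos (by linarith : 0 < (1 + α * t) * x - (α + t)) hsecond]

theorem norm_le_schwarzPickBound {w : ℂ → ℂ} (hd : DifferentiableOn ℂ w (ball 0 1))
    (hmaps : MapsTo w (ball 0 1) (closedBall 0 1)) {z : ℂ} (hz : z ∈ ball 0 1) :
    ‖w z‖ ≤ schwarzPickBound ‖w 0‖ ‖z‖ := by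
  have hw : ∀ ζ ∈ ball (0 : ℂ) 1, ‖w ζ‖ ≤ 1 := fun ζ hζ => mem_closedBall_zero_iff.1 (hmaps hζ)
  rcases (hw 0 (mem_ball_self one_pos)).eq_or_lt with ha | ha
  · rw [ha, schwarzPickBound_one_left (norm_nonneg z)]
    exact hw z hz
  set a := w 0
  have hden : ∀ ζ ∈ ball (0 : ℂ) 1, 1 - conj a * w ζ ≠ 0 := by
    intro ζ hζ hzero
    have : ‖conj a * w ζ‖ < 1 := by
      rw [norm_mul, RCLike.norm_conj]
      nlinarith [hw ζ hζ, norm_nonneg (w ζ), norm_nonneg a]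
    rw [← sub_eq_zero.1 hzero, norm_one] at this
    exact this.false
  set h : ℂ → ℂ := fun ζ => (w ζ - a) / (1 - conj a * w ζ)
  have hhd : DifferentiableOn ℂ h (ball 0 1) :=
    (hd.sub_const a).div ((differentiableOn_const 1).sub (hd.const_mul _)) hden
  have hhmaps : MapsTo h (ball 0 1) (closedBall 0 1) := by
    intro ζ hζ
    rw [mem_closedBall_zero_iff, norm_div, div_le_one (norm_pos_iff.2 (hden ζ hζ))]
    exact norm_sub_le_norm_one_sub_conj_mul ha.le (hw ζ hζ)
  have hschwarz : ‖h z‖ ≤ ‖z‖ :=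
    norm_le_norm_of_mapsTo_ball hhd hhmaps (by simp [h, a]) (mem_ball_zero_iff.1 hz)
  rw [norm_div, div_le_iff₀ (norm_pos_iff.2 (hden z hz))] at hschwarz
  exact norm_le_schwarzPickBound_of_norm_sub_le ha (norm_nonneg z) (mem_ball_zero_iff.1 hz)
    hschwarz

theorem norm_le_mul_schwarzPickBound {g : ℂ → ℂ} (hd : DifferentiableOn ℂ g (ball 0 1))
    (hmaps : MapsTo g (ball 0 1) (closedBall 0 1)) (hg0 : g 0 = 0) {z : ℂ}
    (hz : z ∈ ball 0 1) : ‖g z‖ ≤ ‖z‖ * schwarzPickBound ‖deriv g 0‖ ‖z‖ := by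
  have hmaps' : MapsTo g (ball 0 1) (closedBall (g 0) 1) := by rwa [hg0]
  have hwd : DifferentiableOn ℂ (dslope g 0) (ball 0 1) :=
    (differentiableOn_dslope (isOpen_ball.mem_nhds (mem_ball_self one_pos))).2 hd
  have hwmaps : MapsTo (dslope g 0) (ball 0 1) (closedBall 0 1) := fun ζ hζ => by
    simpa using norm_dslope_le_div_of_mapsTo_ball hd hmaps' hζ
  have hgz : g z = z * dslope g 0 z := by simpa [hg0] using (sub_smul_dslope g 0 z).symm
  rw [hgz, norm_mul, ← dslope_same]
  exact mul_le_mul_of_nonneg_left (norm_le_schwarzPickBound hwd hwmaps hz) (norm_nonneg z)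

end Complex

theorem ContinuousLinearMap.exists_norm_eq_one_and_norm_apply_eq_opNorm {𝕜 E F : Type*}
    [RCLike 𝕜] [NormedAddCommGroup E] [NormedSpace 𝕜 E] [FiniteDimensional 𝕜 E] [Nontrivial E]
    [SeminormedAddCommGroup F] [NormedSpace 𝕜 F] (T : E →L[𝕜] F) :
    ∃ x, ‖x‖ = 1 ∧ ‖T x‖ = ‖T‖ := by
  have : ProperSpace E := FiniteDimensional.proper_rclike 𝕜 E
  have : Nonempty (sphere (0 : E) 1) := NormedSpace.sphere_nonempty_rclike 𝕜 zero_le_one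
  obtain ⟨x, hx, hmax⟩ := (isCompact_sphere (0 : E) 1).exists_isMaxOn
    (nonempty_coe_sort.1 this) (continuous_norm.comp T.continuous).continuousOn
  have hx1 : ‖x‖ = 1 := by simpa using hx
  refine ⟨x, hx1, le_antisymm (T.le_opNorm_of_le hx1.le |>.trans_eq (mul_one _)) ?_⟩
  exact T.opNorm_le_of_unit_norm (norm_nonneg _) fun y hy => hmax (by simpa using hy)

section Slices

variable {E F : Type*} [NormedAddCommGroup E] [NormedSpace ℂ E] [NormedAddCommGroup F]
  [NormedSpace ℂ F] {f : E → F}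

lemma mapsTo_smul_ball_ball {ζ : E} (hζ : ‖ζ‖ ≤ 1) :
    MapsTo (fun lam : ℂ => lam • ζ) (ball 0 1) (ball 0 1) := fun lam hlam => by
  rw [mem_ball_zero_iff] at hlam ⊢
  rw [norm_smul]
  nlinarith [norm_nonneg lam]

lemma DifferentiableOn.comp_smul_ball (hd : DifferentiableOn ℂ f (ball 0 1)) {ζ : E}
    (hζ : ‖ζ‖ ≤ 1) : DifferentiableOn ℂ (fun lam : ℂ => f (lam • ζ)) (ball 0 1) :=
  hd.comp (differentiable_id.smul_const ζ).differentiableOn (mapsTo_smul_ball_ball hζ)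

lemma DifferentiableOn.hasDerivAt_comp_smul_zero (hd : DifferentiableOn ℂ f (ball 0 1))
    (ζ : E) : HasDerivAt (fun lam : ℂ => f (lam • ζ)) (fderiv ℂ f 0 ζ) 0 := by
  have hf : HasFDerivAt f (fderiv ℂ f 0) ((0 : ℂ) • ζ) := by
    rw [zero_smul]
    exact (hd.differentiableAt (isOpen_ball.mem_nhds (mem_ball_self one_pos))).hasFDerivAt
  simpa [Function.comp_def] using
    hf.comp_hasDerivAt (0 : ℂ) ((hasDerivAt_id (0 : ℂ)).smul_const ζ)

theorem norm_le_mul_schwarzPickBound_norm_fderiv (hd : DifferentiableOn ℂ f (ball 0 1))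
    (hmaps : MapsTo f (ball 0 1) (closedBall 0 1)) (hf0 : f 0 = 0) {Z : E} (hZ : ‖Z‖ < 1) :
    ‖f Z‖ ≤ ‖Z‖ * schwarzPickBound ‖fderiv ℂ f 0‖ ‖Z‖ := by
  rcases eq_or_ne Z 0 with rfl | hZ0
  · simp [hf0]
  obtain ⟨ℓ, hℓ, hℓf⟩ := exists_dual_vector'' ℂ (f Z)
  set ζ : E := (‖Z‖⁻¹ : ℂ) • Z
  have hζ : ‖ζ‖ = 1 := norm_smul_inv_norm hZ0
  set g : ℂ → ℂ := fun lam => ℓ (f (lam • ζ))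
  have hgd : DifferentiableOn ℂ g (ball 0 1) :=
    ℓ.differentiable.comp_differentiableOn (hd.comp_smul_ball hζ.le)
  have hgmaps : MapsTo g (ball 0 1) (closedBall 0 1) := fun lam hlam => by
    have := mem_closedBall_zero_iff.1 (hmaps (mapsTo_smul_ball_ball hζ.le hlam))
    rw [mem_closedBall_zero_iff]
    exact (ℓ.le_opNorm _).trans (by nlinarith [norm_nonneg (f (lam • ζ))])
  have hgZ : g ‖Z‖ = ‖f Z‖ := by simp [g, ζ, smul_smul, hZ0, hℓf]
  have hg' : deriv g 0 = ℓ (fderiv ℂ f 0 ζ) :=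
    (ℓ.hasFDerivAt.comp_hasDerivAt (0 : ℂ) (hd.hasDerivAt_comp_smul_zero ζ)).deriv
  have hg'_le : ‖deriv g 0‖ ≤ ‖fderiv ℂ f 0‖ := by
    rw [hg']
    calc ‖ℓ (fderiv ℂ f 0 ζ)‖ ≤ ‖fderiv ℂ f 0 ζ‖ :=
          ℓ.le_of_opNorm_le hℓ _ |>.trans_eq (one_mul _)
      _ ≤ ‖fderiv ℂ f 0‖ :=
          (fderiv ℂ f 0).le_of_opNorm_le le_rfl _ |>.trans_eq (by rw [hζ, mul_one])
  have hZball : (‖Z‖ : ℂ) ∈ ball 0 1 := by simpa using hZ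
  calc ‖f Z‖ = ‖g ‖Z‖‖ := by rw [hgZ, Complex.norm_real, norm_norm]
    _ ≤ ‖Z‖ * schwarzPickBound ‖deriv g 0‖ ‖Z‖ := by
      simpa using Complex.norm_le_mul_schwarzPickBound hgd hgmaps (by simp [g, hf0]) hZball
    _ ≤ ‖Z‖ * schwarzPickBound ‖fderiv ℂ f 0‖ ‖Z‖ := by
      gcongr
      exact schwarzPickBound_mono_left (norm_nonneg _) hg'_le (norm_nonneg _) hZ.le

theorem norm_fderiv_zero_lt_one_of_not_slice [FiniteDimensional ℂ E] [StrictConvexSpace ℝ F]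
    (hd : DifferentiableOn ℂ f (ball 0 1))
    (hmaps : MapsTo f (ball 0 1) (closedBall 0 1)) (hf0 : f 0 = 0)
    (hslice : ¬ ∃ (ζ : E) (η : F), ‖ζ‖ = 1 ∧ ‖η‖ = 1 ∧
      ∀ lam : ℂ, ‖lam‖ < 1 → f (lam • ζ) = lam • η) :
    ‖fderiv ℂ f 0‖ < 1 := by
  have hle : ‖fderiv ℂ f 0‖ ≤ 1 :=
    Complex.norm_fderiv_le_one_of_mapsTo_ball hd (by rwa [hf0]) one_pos
  refine hle.lt_of_ne fun h1 => hslice ?_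
  rcases subsingleton_or_nontrivial E with hE | hE
  · simp [Subsingleton.elim (fderiv ℂ f 0) 0] at h1
  obtain ⟨ζ, hζ, hTζ⟩ := (fderiv ℂ f 0).exists_norm_eq_one_and_norm_apply_eq_opNorm
  have hF := hd.hasDerivAt_comp_smul_zero ζ
  have hlinear := Complex.affine_of_mapsTo_ball_of_norm_dslope_eq_div (hd.comp_smul_ball hζ.le)
    (by simpa [hf0, Function.comp_def] using hmaps.comp (mapsTo_smul_ball_ball hζ.le))
    (mem_ball_self one_pos)
    (by rw [dslope_same, hF.deriv, hTζ, h1, div_one])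
  refine ⟨ζ, fderiv ℂ f 0 ζ, hζ, hTζ.trans h1, fun lam hlam => ?_⟩
  simpa [hf0, hF.deriv] using hlinear (mem_ball_zero_iff.2 hlam)

end Slices

lemma unitBall_eq_ball (N : ℕ) : unitBall N = ball 0 1 := by
  ext Z
  simp [unitBall]

theorem stmt5_general {N : ℕ}
    (f : EuclideanSpace ℂ (Fin N) → EuclideanSpace ℂ (Fin N))
    (hmaps : Set.MapsTo f (unitBall N) (unitBall N))
    (hhol : DifferentiableOn ℂ f (unitBall N))
    (hf0 : f 0 = 0)
    (hslice : ¬ ∃ (ζ η : EuclideanSpace ℂ (Fin N)), ‖ζ‖ = 1 ∧ ‖η‖ = 1 ∧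
      ∀ lam : ℂ, ‖lam‖ < 1 → f (lam • ζ) = lam • η)
    (M : ℝ → ℝ)
    (hM : ∀ r : ℝ, M r = sSup ((fun Z => ‖f Z‖) '' {Z : EuclideanSpace ℂ (Fin N) | ‖Z‖ < r})) :
    ∀ r₀ : ℝ, 0 < r₀ → r₀ < 1 →
      ∃ c : ℝ, c < 1 ∧ ∀ r : ℝ, r₀ ≤ r → r < 1 → 1 - r ≤ c * (1 - M r) := by
  intro r₀ hr₀ hr₀1
  rw [unitBall_eq_ball] at hmaps hhol
  replace hmaps := hmaps.mono_right ball_subset_closedBall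
  set m := ‖fderiv ℂ f 0‖
  have hm1 : m < 1 := norm_fderiv_zero_lt_one_of_not_slice hhol hmaps hf0 hslice
  refine ⟨(1 + m * r₀) / (1 + r₀), (div_lt_one (by positivity)).2 (by nlinarith), ?_⟩
  intro r hr₀r hr1
  refine one_sub_le_mul_one_sub_of_le_mul_schwarzPickBound (norm_nonneg _) hm1 hr₀ hr₀r hr1 ?_
  rw [hM]
  have hr : 0 ≤ r := hr₀.le.trans hr₀r
  refine Real.sSup_le ?_ (mul_nonneg hr (schwarzPickBound_nonneg (norm_nonneg _) hr))
  rintro _ ⟨Z, hZ, rfl⟩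
  exact (norm_le_mul_schwarzPickBound_norm_fderiv hhol hmaps hf0 (hZ.trans hr1)).trans
    (mul_schwarzPickBound_mono_right (norm_nonneg _) hm1.le (norm_nonneg _) hZ.le)

/-- growth lemma for elliptic maps. If `f : B^N → B^N` is holomorphic with
`f(0)=0` and not unitary on any slice, and `M(r) = sup{‖f(Z)‖ : ‖Z‖ < r}`, then for every
`r₀ ∈ (0,1)` there is a `c = c(r₀) < 1` with `1 − r ≤ c·(1 − M(r))` for all `r ∈ [r₀,1)`. -/
theorem stmt5 {N : ℕ} (hN : 1 ≤ N)
    (f : EuclideanSpace ℂ (Fin N) → EuclideanSpace ℂ (Fin N))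
    (hmaps : Set.MapsTo f (unitBall N) (unitBall N))
    (hhol : DifferentiableOn ℂ f (unitBall N))
    (hf0 : f 0 = 0)
    (hslice : ¬ ∃ (ζ η : EuclideanSpace ℂ (Fin N)), ‖ζ‖ = 1 ∧ ‖η‖ = 1 ∧
      ∀ lam : ℂ, ‖lam‖ < 1 → f (lam • ζ) = lam • η)
    (M : ℝ → ℝ)
    (hM : ∀ r : ℝ, M r = sSup ((fun Z => ‖f Z‖) '' {Z : EuclideanSpace ℂ (Fin N) | ‖Z‖ < r})) :
    ∀ r₀ : ℝ, 0 < r₀ → r₀ < 1 →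
      ∃ c : ℝ, c < 1 ∧ ∀ r : ℝ, r₀ ≤ r → r < 1 → 1 - r ≤ c * (1 - M r) :=
  stmt5_general f hmaps hhol hf0 hslice M hM
end
end

section
/- Let N ≥ 1, a ∈ (0,1) and c ∈ (0,1). Let (z_n, w_n) ∈ H^N (n ≥ 0) be a sequence with heights t_n := Re z_n − ‖w_n‖², such that d((z_n,w_n),(z_{n+1},w_{n+1})) ≤ a for all n and t_{n+k} ≤ c^k · t_n for all n, k ≥ 0. Define the boundary projection pr(z,w) = (i·Im z + ‖w‖², w) ∈ ℂ × ℂ^{N−1}. Then there exists a constant C̃ > 0, independent of n, such that ‖pr(z_n,w_n) − pr(z_{n+1},w_{n+1})‖ ≤ C̃·√t_n for all n, where the norm is the Euclidean norm on ℂ × ℂ^{N−1}. -/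
/-!
Write `D = z + conj z̃ − 2⟨w,w̃⟩` for consecutive points. Then `Re D = t + t̃ + ‖w − w̃‖²`, and a
pseudo-hyperbolic step of size `≤ a` means `(1 − a²)|D|² ≤ 4 t t̃ ≤ 4 t |D|`, so `|D| ≲ t` and
`‖w − w̃‖ ≲ √t`. Since the heights decay geometrically, the `w_n` form a Cauchy, hence bounded,
sequence. Finally `Im z − Im z̃ = Im D + 2 Im⟨w − w̃, w̃⟩` and `‖w‖² − ‖w̃‖²` are both
`≲ |D| + ‖w − w̃‖ ≲ √t` once `‖w_n‖` is bounded.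
-/

noncomputable section

open Filter Topology

/-- The Siegel domain `H^N = {(z,w) ∈ ℂ × ℂ^{N−1} : Re z > ‖w‖²}` (here `n = N − 1`). -/
def siegel (n : ℕ) : Set (ℂ × EuclideanSpace ℂ (Fin n)) := {Z | ‖Z.2‖ ^ 2 < Z.1.re}

/-- The height `t(z,w) = Re z − ‖w‖²` of a point of the Siegel domain. -/
def ht {n : ℕ} (Z : ℂ × EuclideanSpace ℂ (Fin n)) : ℝ := Z.1.re - ‖Z.2‖ ^ 2

/-- The Hermitian inner product `⟨w,w̃⟩ = Σ_j w_j * conj (w̃_j)` of the paper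
(which is `inner w̃ w` in Mathlib's conjugate-linear-in-the-first-slot convention). -/
def hip' {n : ℕ} (w w' : EuclideanSpace ℂ (Fin n)) : ℂ := inner ℂ w' w

/-- The pseudo-hyperbolic distance on the Siegel domain: the number `d ∈ [0,1)` with
`d² = 1 − 4·t(z,w)·t(z̃,w̃)/|z + conj z̃ − 2⟨w,w̃⟩|²`. -/
def sphd {n : ℕ} (Z W : ℂ × EuclideanSpace ℂ (Fin n)) : ℝ :=
  Real.sqrt (1 - 4 * ht Z * ht W / ‖Z.1 + (starRingEnd ℂ) W.1 - 2 * hip' Z.2 W.2‖ ^ 2)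

/-- The Euclidean projection `pr(z,w) = (i·Im z + ‖w‖², w)` onto the boundary
of the Siegel domain. -/
def bpr {n : ℕ} (Z : ℂ × EuclideanSpace ℂ (Fin n)) : ℂ × EuclideanSpace ℂ (Fin n) :=
  ((Z.1.im : ℂ) * Complex.I + ((‖Z.2‖ ^ 2 : ℝ) : ℂ), Z.2)

/-- The Euclidean norm on `ℂ × ℂ^{N−1}`. -/
def enorm' {n : ℕ} (Z : ℂ × EuclideanSpace ℂ (Fin n)) : ℝ :=
  Real.sqrt (‖Z.1‖ ^ 2 + ‖Z.2‖ ^ 2)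

def siegelForm {n : ℕ} (Z W : ℂ × EuclideanSpace ℂ (Fin n)) : ℂ :=
  Z.1 + (starRingEnd ℂ) W.1 - 2 * hip' Z.2 W.2

section SiegelForm

variable {n : ℕ} {Z W : ℂ × EuclideanSpace ℂ (Fin n)}

lemma ht_pos (hZ : Z ∈ siegel n) : 0 < ht Z := sub_pos.2 hZ

lemma siegelForm_re (Z W : ℂ × EuclideanSpace ℂ (Fin n)) :
    (siegelForm Z W).re = ht Z + ht W + ‖Z.2 - W.2‖ ^ 2 := by
  have hsq := norm_sub_sq (𝕜 := ℂ) Z.2 W.2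
  have hsymm := inner_re_symm (𝕜 := ℂ) Z.2 W.2
  simp only [RCLike.re_to_complex] at hsq hsymm
  simp only [siegelForm, hip', ht, Complex.sub_re, Complex.add_re, Complex.conj_re,
    Complex.mul_re, Complex.re_ofNat, Complex.im_ofNat, zero_mul, sub_zero]
  rw [hsq, hsymm]
  ring

lemma siegelForm_im (Z W : ℂ × EuclideanSpace ℂ (Fin n)) :
    (siegelForm Z W).im = Z.1.im - W.1.im - 2 * (hip' Z.2 W.2).im := by
  simp [siegelForm, sub_eq_add_neg]

lemma abs_im_hip'_le (w w' : EuclideanSpace ℂ (Fin n)) :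
    |(hip' w w').im| ≤ ‖w - w'‖ * ‖w'‖ := by
  have hsplit : hip' w w' = inner ℂ w' (w - w') + inner ℂ w' w' := by
    rw [hip', inner_sub_right, sub_add_cancel]
  have hreal : (inner ℂ w' w' : ℂ).im = 0 := inner_self_im (𝕜 := ℂ) w'
  rw [hsplit, Complex.add_im, hreal, add_zero, mul_comm]
  exact (Complex.abs_im_le_norm _).trans (norm_inner_le_norm w' (w - w'))

lemma norm_snd_sub_sq_le_norm_siegelForm (hZ : Z ∈ siegel n) (hW : W ∈ siegel n) :
    ‖Z.2 - W.2‖ ^ 2 ≤ ‖siegelForm Z W‖ := by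
  have hre := siegelForm_re Z W
  linarith [Complex.re_le_norm (siegelForm Z W), ht_pos hZ, ht_pos hW]

lemma one_sub_sq_mul_norm_siegelForm_sq_le {a : ℝ} (hZ : Z ∈ siegel n) (hW : W ∈ siegel n)
    (hd : sphd Z W ≤ a) :
    (1 - a ^ 2) * ‖siegelForm Z W‖ ^ 2 ≤ 4 * ht Z * ht W := by
  have hprod : 0 < 4 * ht Z * ht W := by have := ht_pos hZ; have := ht_pos hW; positivity
  rcases (sq_nonneg ‖siegelForm Z W‖).eq_or_lt with hzero | hpos
  · rw [← hzero, mul_zero]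
    exact hprod.le
  have hsq : 1 - 4 * ht Z * ht W / ‖siegelForm Z W‖ ^ 2 ≤ a ^ 2 :=
    (Real.sqrt_le_iff.1 hd).2
  rw [← le_div_iff₀ hpos]
  linarith

lemma norm_siegelForm_le_of_sphd_le {a : ℝ} (ha1 : a < 1) (hZ : Z ∈ siegel n)
    (hW : W ∈ siegel n) (hd : sphd Z W ≤ a) :
    ‖siegelForm Z W‖ ≤ 4 / (1 - a ^ 2) * ht Z := by
  have ha0 : 0 ≤ a := (Real.sqrt_nonneg _).trans hd
  have hcoef : 0 < 1 - a ^ 2 := by nlinarith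
  -- This cancels one factor `‖siegelForm Z W‖` in `one_sub_sq_mul_norm_siegelForm_sq_le`.
  have hW_le : ht W ≤ ‖siegelForm Z W‖ := by
    have hre := siegelForm_re Z W
    linarith [Complex.re_le_norm (siegelForm Z W), ht_pos hZ, sq_nonneg ‖Z.2 - W.2‖]
  have hmain := one_sub_sq_mul_norm_siegelForm_sq_le hZ hW hd
  rw [div_mul_eq_mul_div, le_div_iff₀ hcoef]
  nlinarith [ht_pos hZ, ht_pos hW]

end SiegelForm

lemma enorm'_le_norm_fst_add_norm_snd {n : ℕ} (X : ℂ × EuclideanSpace ℂ (Fin n)) :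
    enorm' X ≤ ‖X.1‖ + ‖X.2‖ := by
  rw [enorm', Real.sqrt_le_left (by positivity)]
  nlinarith [norm_nonneg X.1, norm_nonneg X.2]

lemma enorm'_bpr_sub_le {n : ℕ} {Z W : ℂ × EuclideanSpace ℂ (Fin n)} {M : ℝ}
    (hZ : Z ∈ siegel n) (hW : W ∈ siegel n) (hZM : ‖Z.2‖ ≤ M) (hWM : ‖W.2‖ ≤ M) :
    enorm' (bpr Z - bpr W) ≤
      ‖siegelForm Z W‖ + (4 * M + 1) * √‖siegelForm Z W‖ := by
  set δ := ‖Z.2 - W.2‖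
  have hδ : δ ≤ √‖siegelForm Z W‖ :=
    (Real.le_sqrt (norm_nonneg _) (norm_nonneg _)).2 (norm_snd_sub_sq_le_norm_siegelForm hZ hW)
  have hfst : (bpr Z - bpr W).1 =
      ((Z.1.im - W.1.im : ℝ) : ℂ) * Complex.I + ((‖Z.2‖ ^ 2 - ‖W.2‖ ^ 2 : ℝ) : ℂ) := by
    simp only [bpr, Prod.fst_sub]
    push_cast
    ring
  have him : |Z.1.im - W.1.im| ≤ ‖siegelForm Z W‖ + 2 * M * δ := by
    have hsplit : Z.1.im - W.1.im = (siegelForm Z W).im + 2 * (hip' Z.2 W.2).im := by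
      rw [siegelForm_im]; ring
    rw [hsplit]
    refine (abs_add_le _ _).trans (add_le_add (Complex.abs_im_le_norm _) ?_)
    rw [abs_mul, abs_two, mul_assoc, mul_comm M δ]
    gcongr
    exact (abs_im_hip'_le Z.2 W.2).trans (mul_le_mul_of_nonneg_left hWM (norm_nonneg _))
  have hnorm_sq : |‖Z.2‖ ^ 2 - ‖W.2‖ ^ 2| ≤ 2 * M * δ := by
    rw [sq_sub_sq, abs_mul, abs_of_nonneg (by positivity), two_mul]
    exact mul_le_mul (add_le_add hZM hWM) (abs_norm_sub_norm_le _ _) (abs_nonneg _)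
      (by linarith [norm_nonneg Z.2])
  have hM : 0 ≤ M := (norm_nonneg _).trans hZM
  calc enorm' (bpr Z - bpr W) ≤ ‖(bpr Z - bpr W).1‖ + δ := enorm'_le_norm_fst_add_norm_snd _
    _ ≤ |Z.1.im - W.1.im| + |‖Z.2‖ ^ 2 - ‖W.2‖ ^ 2| + δ := by
      rw [hfst]
      gcongr
      refine (norm_add_le _ _).trans_eq ?_
      simp only [norm_mul, Complex.norm_I, mul_one, Complex.norm_real, Real.norm_eq_abs]
    _ ≤ ‖siegelForm Z W‖ + (4 * M + 1) * δ := by linarith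
    _ ≤ ‖siegelForm Z W‖ + (4 * M + 1) * √‖siegelForm Z W‖ := by gcongr

lemma exists_forall_norm_le_of_norm_sub_succ_le_geometric {E : Type*} [SeminormedAddCommGroup E]
    {x : ℕ → E} {C r : ℝ} (hr : r < 1) (hx : ∀ k, ‖x k - x (k + 1)‖ ≤ C * r ^ k) :
    ∃ M, ∀ k, ‖x k‖ ≤ M := by
  have hcauchy : CauchySeq x :=
    cauchySeq_of_le_geometric r C hr fun k => (dist_eq_norm _ _).trans_le (hx k)
  obtain ⟨M, hM⟩ := isBounded_iff_forall_norm_le.1 hcauchy.isBounded_range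
  exact ⟨M, fun k => hM _ ⟨k, rfl⟩⟩

lemma exists_forall_norm_snd_le {n : ℕ} {Z : ℕ → ℂ × EuclideanSpace ℂ (Fin n)} {K c : ℝ}
    (hK : 0 ≤ K) (hc0 : 0 ≤ c) (hc1 : c < 1) (hZ : ∀ k, Z k ∈ siegel n)
    (hform : ∀ k, ‖siegelForm (Z k) (Z (k + 1))‖ ≤ K * ht (Z k))
    (hheight : ∀ k, ht (Z k) ≤ c ^ k * ht (Z 0)) :
    ∃ M, ∀ k, ‖(Z k).2‖ ≤ M := by
  have hstep (k) : ‖(Z k).2 - (Z (k + 1)).2‖ ≤ √(K * ht (Z 0)) * √c ^ k := by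
    refine le_of_pow_le_pow_left₀ two_ne_zero (by positivity) ?_
    rw [mul_pow, ← pow_mul, mul_comm k, pow_mul,
      Real.sq_sqrt (mul_nonneg hK (ht_pos (hZ 0)).le), Real.sq_sqrt hc0]
    calc ‖(Z k).2 - (Z (k + 1)).2‖ ^ 2 ≤ ‖siegelForm (Z k) (Z (k + 1))‖ :=
          norm_snd_sub_sq_le_norm_siegelForm (hZ k) (hZ (k + 1))
      _ ≤ K * (c ^ k * ht (Z 0)) := (hform k).trans (by gcongr; exact hheight k)
      _ = K * ht (Z 0) * c ^ k := by ring
  exact exists_forall_norm_le_of_norm_sub_succ_le_geometric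
    ((Real.sqrt_lt' one_pos).2 (by rwa [one_pow])) hstep

theorem stmt6_general {n : ℕ} (a c : ℝ) (ha1 : a < 1) (hc0 : 0 < c) (hc1 : c < 1)
    (Z : ℕ → ℂ × EuclideanSpace ℂ (Fin n)) (hZ : ∀ k, Z k ∈ siegel n)
    (hstep : ∀ k, sphd (Z k) (Z (k + 1)) ≤ a)
    (hdecay : ∀ k m : ℕ, ht (Z (k + m)) ≤ c ^ m * ht (Z k)) :
    ∃ C : ℝ, 0 < C ∧ ∀ k,
      enorm' (bpr (Z k) - bpr (Z (k + 1))) ≤ C * Real.sqrt (ht (Z k)) := by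
  set K := 4 / (1 - a ^ 2)
  have hK : 0 < K := by
    have ha0 : 0 ≤ a := (Real.sqrt_nonneg _).trans (hstep 0)
    exact div_pos four_pos (by nlinarith)
  have hform (k) : ‖siegelForm (Z k) (Z (k + 1))‖ ≤ K * ht (Z k) :=
    norm_siegelForm_le_of_sphd_le ha1 (hZ k) (hZ (k + 1)) (hstep k)
  have hheight (k) : ht (Z k) ≤ c ^ k * ht (Z 0) := by simpa using hdecay 0 k
  obtain ⟨M, hM⟩ := exists_forall_norm_snd_le hK.le hc0.le hc1 hZ hform hheight
  have hM0 : 0 ≤ 4 * M + 1 := by linarith [(norm_nonneg _).trans (hM 0)]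
  have ht0 := ht_pos (hZ 0)
  refine ⟨K * √(ht (Z 0)) + (4 * M + 1) * √K, by positivity, fun k => ?_⟩
  have htk : ht (Z k) ≤ √(ht (Z 0)) * √(ht (Z k)) := by
    have hle : ht (Z k) ≤ ht (Z 0) :=
      (hheight k).trans (mul_le_of_le_one_left ht0.le (pow_le_one₀ hc0.le hc1.le))
    calc ht (Z k) = √(ht (Z k)) * √(ht (Z k)) := (Real.mul_self_sqrt (ht_pos (hZ k)).le).symm
      _ ≤ √(ht (Z 0)) * √(ht (Z k)) := by gcongr
  calc enorm' (bpr (Z k) - bpr (Z (k + 1)))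
      ≤ ‖siegelForm (Z k) (Z (k + 1))‖ + (4 * M + 1) * √‖siegelForm (Z k) (Z (k + 1))‖ :=
        enorm'_bpr_sub_le (hZ k) (hZ (k + 1)) (hM k) (hM (k + 1))
    _ ≤ K * ht (Z k) + (4 * M + 1) * (√K * √(ht (Z k))) := by
        rw [← Real.sqrt_mul hK.le]
        gcongr <;> exact hform k
    _ ≤ (K * √(ht (Z 0)) + (4 * M + 1) * √K) * √(ht (Z k)) := by
        linarith [mul_le_mul_of_nonneg_left htk hK.le]

/-- if a sequence in the Siegel domain has pseudo-hyperbolic steps bounded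
by `a < 1` and heights decaying geometrically (`t_{n+k} ≤ c^k t_n`), then the Euclidean
distance between boundary projections of consecutive points is `≤ C̃·√t_n`. -/
theorem stmt6 {n : ℕ} (a c : ℝ) (ha0 : 0 < a) (ha1 : a < 1) (hc0 : 0 < c) (hc1 : c < 1)
    (Z : ℕ → ℂ × EuclideanSpace ℂ (Fin n)) (hZ : ∀ k, Z k ∈ siegel n)
    (hstep : ∀ k, sphd (Z k) (Z (k + 1)) ≤ a)
    (hdecay : ∀ k m : ℕ, ht (Z (k + m)) ≤ c ^ m * ht (Z k)) :
    ∃ C : ℝ, 0 < C ∧ ∀ k,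
      enorm' (bpr (Z k) - bpr (Z (k + 1))) ≤ C * Real.sqrt (ht (Z k)) :=
  stmt6_general a c ha1 hc0 hc1 Z hZ hstep hdecay
end
end

section
/- Let N ≥ 1 and α > 1. Let (z_n, w_n) ∈ H^N be a sequence with t_n := Re z_n − ‖w_n‖² > 0 and y_n := Im z_n, satisfying Re z_n / t_n → 1, y_n / t_n → 0, ‖w_n‖² / t_n → 0, and t_n / t_{n+1} → α. For each n define τ_n : H^N → H^N by τ_n(z,w) = (t_n z + ‖w_n‖² + i y_n + 2√(t_n) ⟨w, w_n⟩, √(t_n) w + w_n), and for k ≥ 1 define η_k(z,w) = (α^k z, α^{k/2} w). Then each τ_n is a biholomorphic automorphism of H^N, and: (1) for every fixed k ≥ 1, the maps τ_{n+k}^{-1} ∘ τ_n converge to η_k uniformly on compact subsets of H^N as n → ∞; (2) the maps τ_{n+1}^{-1} ∘ η_1^{-1} ∘ τ_n converge to the identity map uniformly on compact subsets of H^N as n → ∞. -/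
/-!
Write `τ(t, y, v)(z, w) = (t z + ‖v‖² + i y + 2√t ⟨w, v⟩, √t w + v)`; it multiplies the height by
`t`, so for `t > 0` it is an automorphism of the Siegel domain with an explicit affine inverse.
The composite `τ(t', y', v')⁻¹ ∘ τ(t, y, v)` is again affine: its linear part is
`(z, w) ↦ ((t/t') z, √(t/t') w)`, and all remaining coefficients are bounded by `‖v‖²/t`, `|y|/t`,
`‖v'‖²/t'`, `|y'|/t'` and `t/t'`. Along the sequence the normalised quantities tend to `0` and
`t_n / t_{n+k} → α^k`, so the composites converge to the dilation `η_k = τ(α^k, 0, 0)` uniformly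
on bounded sets. For (2), `η_1⁻¹ ∘ τ(t, y, v) = τ(t/α, y/α, v/√α)` has the same form, with
ratio tending to `1`.
-/

noncomputable section

open Filter Topology

open scoped InnerProductSpace

lemma tendstoUniformlyOn_of_dist_le_mul {ι X Y : Type*} [SeminormedAddCommGroup X]
    [PseudoMetricSpace Y] {l : Filter ι} {F : ι → X → Y} {f : X → Y} {K : Set X}
    (hK : Bornology.IsBounded K) {ε : ι → ℝ} (hε : Tendsto ε l (𝓝 0))
    (hF : ∀ i, ∀ p ∈ K, dist (f p) (F i p) ≤ ε i * (‖p‖ + 1)) :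
    TendstoUniformlyOn F f l K := by
  obtain ⟨R, hR⟩ := hK.exists_norm_le
  have hlim : Tendsto (fun i => |ε i| * (|R| + 1)) l (𝓝 0) := by
    simpa using hε.abs.mul_const (|R| + 1)
  rw [Metric.tendstoUniformlyOn_iff]
  intro δ hδ
  filter_upwards [hlim.eventually (gt_mem_nhds hδ)] with i hi p hp
  calc dist (f p) (F i p) ≤ ε i * (‖p‖ + 1) := hF i p hp
    _ ≤ |ε i| * (|R| + 1) := by
      gcongr
      · exact le_abs_self _
      · exact (hR p hp).trans (le_abs_self R)
    _ < δ := hi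

lemma tendsto_zero_of_norm_sq_le {ι F : Type*} [SeminormedAddCommGroup F] {l : Filter ι}
    {x : ι → F} {g : ι → ℝ} (hg : Tendsto g l (𝓝 0)) (hx : ∀ i, ‖x i‖ ^ 2 ≤ g i) :
    Tendsto x l (𝓝 0) :=
  squeeze_zero_norm (fun i => Real.le_sqrt_of_sq_le (hx i)) (by simpa using hg.sqrt)

lemma norm_sub_sq_le_two_mul {F : Type*} [SeminormedAddCommGroup F] (a b : F) :
    ‖a - b‖ ^ 2 ≤ 2 * (‖a‖ ^ 2 + ‖b‖ ^ 2) := by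
  nlinarith [norm_sub_le a b, norm_nonneg (a - b), sq_nonneg (‖a‖ - ‖b‖)]

section SiegelAut

variable {E : Type*} [NormedAddCommGroup E] [InnerProductSpace ℂ E]

lemma tendstoUniformlyOn_affine {ι : Type*} {l : Filter ι} {K : Set (ℂ × E)}
    (hK : Bornology.IsBounded K) {a b c : ι → ℂ} {x u : ι → E} {a₀ b₀ : ℂ}
    (ha : Tendsto a l (𝓝 a₀)) (hb : Tendsto b l (𝓝 b₀)) (hc : Tendsto c l (𝓝 0))
    (hx : Tendsto x l (𝓝 0)) (hu : Tendsto u l (𝓝 0)) :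
    TendstoUniformlyOn (fun i p => (a i * p.1 + c i + ⟪x i, p.2⟫_ℂ, b i • p.2 + u i))
      (fun p => (a₀ * p.1, b₀ • p.2)) l K := by
  refine tendstoUniformlyOn_of_dist_le_mul hK
    (ε := fun i => ‖a i - a₀‖ + ‖b i - b₀‖ + ‖c i‖ + ‖x i‖ + ‖u i‖) ?_ ?_
  · simpa using (((((ha.sub_const a₀).norm.add (hb.sub_const b₀).norm).add hc.norm).add
      hx.norm).add hu.norm)
  rintro i ⟨z, w⟩ -
  have hz : ‖z‖ ≤ ‖(z, w)‖ := norm_fst_le (z, w)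
  have hw : ‖w‖ ≤ ‖(z, w)‖ := norm_snd_le (z, w)
  rw [dist_comm, Prod.dist_eq, dist_eq_norm, dist_eq_norm]
  refine max_le ?_ ?_
  · calc ‖a i * z + c i + ⟪x i, w⟫_ℂ - a₀ * z‖
        = ‖(a i - a₀) * z + c i + ⟪x i, w⟫_ℂ‖ := by ring_nf
      _ ≤ ‖a i - a₀‖ * ‖z‖ + ‖c i‖ + ‖x i‖ * ‖w‖ := by
        grw [norm_add₃_le, norm_mul, norm_inner_le_norm]
      _ ≤ _ := by nlinarith [norm_nonneg (a i - a₀), norm_nonneg (b i - b₀), norm_nonneg (c i),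
          norm_nonneg (x i), norm_nonneg (u i), norm_nonneg z, norm_nonneg w]
  · calc ‖b i • w + u i - b₀ • w‖ = ‖(b i - b₀) • w + u i‖ := by rw [sub_smul]; abel_nf
      _ ≤ ‖b i - b₀‖ * ‖w‖ + ‖u i‖ := by grw [norm_add_le, norm_smul]
      _ ≤ _ := by nlinarith [norm_nonneg (a i - a₀), norm_nonneg (b i - b₀), norm_nonneg (c i),
          norm_nonneg (x i), norm_nonneg (u i), norm_nonneg z, norm_nonneg w]

/-- `⟪v, p.2⟫_ℂ` is the paper's `⟨w, v⟩`, i.e. `hip' p.2 v`. -/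
def siegelAut (t y : ℝ) (v : E) (p : ℂ × E) : ℂ × E :=
  ((t : ℂ) * p.1 + ((‖v‖ ^ 2 : ℝ) : ℂ) + (y : ℂ) * Complex.I
      + 2 * ((Real.sqrt t : ℝ) : ℂ) * ⟪v, p.2⟫_ℂ,
    ((Real.sqrt t : ℝ) : ℂ) • p.2 + v)

def siegelAutInv (t y : ℝ) (v : E) (p : ℂ × E) : ℂ × E :=
  ((p.1 + ((‖v‖ ^ 2 : ℝ) : ℂ) - (y : ℂ) * Complex.I - 2 * ⟪v, p.2⟫_ℂ) / (t : ℂ),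
    (((Real.sqrt t)⁻¹ : ℝ) : ℂ) • (p.2 - v))

lemma siegelAut_zero_zero (t : ℝ) :
    siegelAut t 0 (0 : E) = fun p => ((t : ℂ) * p.1, ((Real.sqrt t : ℝ) : ℂ) • p.2) := by
  ext1 p; simp [siegelAut]

lemma siegelAut_one_zero_zero : siegelAut 1 0 (0 : E) = id := by
  ext1 p; simp [siegelAut]

lemma differentiable_siegelAut (t y : ℝ) (v : E) : Differentiable ℂ (siegelAut t y v) := by
  have h : siegelAut t y v = fun p => ((t : ℂ) * p.1 + ((‖v‖ ^ 2 : ℝ) : ℂ) + (y : ℂ) * Complex.I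
      + 2 * ((Real.sqrt t : ℝ) : ℂ) * innerSL ℂ v p.2, ((Real.sqrt t : ℝ) : ℂ) • p.2 + v) := rfl
  rw [h]; fun_prop

lemma differentiable_siegelAutInv (t y : ℝ) (v : E) :
    Differentiable ℂ (siegelAutInv t y v) := by
  have h : siegelAutInv t y v = fun p =>
      ((p.1 + ((‖v‖ ^ 2 : ℝ) : ℂ) - (y : ℂ) * Complex.I - 2 * innerSL ℂ v p.2) / (t : ℂ),
        (((Real.sqrt t)⁻¹ : ℝ) : ℂ) • (p.2 - v)) := rfl
  rw [h]; fun_prop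

lemma leftInverse_siegelAutInv {t : ℝ} (ht : 0 < t) (y : ℝ) (v : E) :
    Function.LeftInverse (siegelAutInv t y v) (siegelAut t y v) := by
  rintro ⟨z, w⟩
  have hs : ((Real.sqrt t : ℝ) : ℂ) ≠ 0 := by exact_mod_cast (Real.sqrt_pos.2 ht).ne'
  have ht' : (t : ℂ) = ((Real.sqrt t : ℝ) : ℂ) ^ 2 := by
    exact_mod_cast (Real.sq_sqrt ht.le).symm
  have hv : ⟪v, v⟫_ℂ = ((‖v‖ ^ 2 : ℝ) : ℂ) := by exact_mod_cast inner_self_eq_norm_sq_to_K v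
  simp only [siegelAut, siegelAutInv, inner_add_right, inner_smul_right, hv,
    add_sub_cancel_right, smul_smul, Prod.mk.injEq]
  constructor
  · rw [ht']; field_simp; push_cast; ring
  · rw [← Complex.ofReal_mul, inv_mul_cancel₀ (Real.sqrt_pos.2 ht).ne', Complex.ofReal_one,
      one_smul]

lemma rightInverse_siegelAutInv {t : ℝ} (ht : 0 < t) (y : ℝ) (v : E) :
    Function.RightInverse (siegelAutInv t y v) (siegelAut t y v) := by
  rintro ⟨z, w⟩
  have hs : ((Real.sqrt t : ℝ) : ℂ) ≠ 0 := by exact_mod_cast (Real.sqrt_pos.2 ht).ne'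
  have ht' : (t : ℂ) = ((Real.sqrt t : ℝ) : ℂ) ^ 2 := by
    exact_mod_cast (Real.sq_sqrt ht.le).symm
  have hv : ⟪v, v⟫_ℂ = ((‖v‖ ^ 2 : ℝ) : ℂ) := by exact_mod_cast inner_self_eq_norm_sq_to_K v
  simp only [siegelAut, siegelAutInv, inner_sub_right, inner_smul_right, hv, smul_smul,
    Prod.mk.injEq]
  constructor
  · rw [ht']; push_cast; field_simp; ring
  · rw [← Complex.ofReal_mul, mul_inv_cancel₀ (Real.sqrt_pos.2 ht).ne', Complex.ofReal_one,
      one_smul, sub_add_cancel]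

lemma re_sub_norm_sq_siegelAut {t : ℝ} (ht : 0 ≤ t) (y : ℝ) (v : E) (p : ℂ × E) :
    (siegelAut t y v p).1.re - ‖(siegelAut t y v p).2‖ ^ 2 = t * (p.1.re - ‖p.2‖ ^ 2) := by
  obtain ⟨z, w⟩ := p
  have hre : (⟪w, v⟫_ℂ).re = (⟪v, w⟫_ℂ).re := inner_re_symm (𝕜 := ℂ) w v
  simp only [siegelAut, norm_add_sq (𝕜 := ℂ), inner_smul_left, norm_smul, Complex.conj_ofReal,
    RCLike.re_to_complex, Complex.norm_real, Real.norm_eq_abs, mul_pow, sq_abs,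
    Complex.add_re, Complex.mul_re, Complex.ofReal_re, Complex.ofReal_im, Complex.I_re,
    Complex.I_im, Complex.mul_im, Complex.re_ofNat, Complex.im_ofNat, hre,
    Real.sq_sqrt ht]
  ring

lemma norm_ofReal_add_ofReal_mul_I_sub_two_inner_le (v v' : E) (y y' : ℝ) :
    ‖((‖v‖ ^ 2 + ‖v'‖ ^ 2 : ℝ) : ℂ) + ((y - y' : ℝ) : ℂ) * Complex.I - 2 * ⟪v', v⟫_ℂ‖
      ≤ 2 * ‖v‖ ^ 2 + 2 * ‖v'‖ ^ 2 + |y| + |y'| := by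
  calc _ ≤ ‖((‖v‖ ^ 2 + ‖v'‖ ^ 2 : ℝ) : ℂ)‖ + ‖((y - y' : ℝ) : ℂ) * Complex.I‖
        + ‖2 * ⟪v', v⟫_ℂ‖ := by grw [norm_sub_le, norm_add_le]
    _ ≤ (‖v‖ ^ 2 + ‖v'‖ ^ 2) + (|y| + |y'|) + 2 * (‖v'‖ * ‖v‖) := by
      rw [norm_mul, norm_mul, Complex.norm_I, mul_one, Complex.norm_real, Complex.norm_real,
        Real.norm_of_nonneg (by positivity), Complex.norm_two, Real.norm_eq_abs]
      gcongr
      · exact abs_sub _ _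
      · exact norm_inner_le_norm _ _
    _ ≤ _ := by nlinarith [sq_nonneg (‖v‖ - ‖v'‖)]

lemma siegelAut_zero_zero_comp_siegelAut {s : ℝ} (hs : 0 ≤ s) (t y : ℝ) (v : E) :
    siegelAut s 0 0 ∘ siegelAut t y v
      = siegelAut (s * t) (s * y) (((Real.sqrt s : ℝ) : ℂ) • v) := by
  ext1 ⟨z, w⟩
  have hs' : ((s : ℝ) : ℂ) = ((Real.sqrt s : ℝ) : ℂ) ^ 2 := by
    exact_mod_cast (Real.sq_sqrt hs).symm
  simp only [siegelAut_zero_zero, Function.comp_apply, siegelAut, norm_smul, inner_smul_left,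
    Complex.conj_ofReal, Complex.norm_real, Real.norm_eq_abs, abs_of_nonneg (Real.sqrt_nonneg s),
    Real.sqrt_mul hs, smul_add, smul_smul, Prod.mk.injEq]
  constructor
  · push_cast; rw [hs']; ring
  · push_cast; rw [mul_comm]

lemma siegelAutInv_comp_siegelAut {t' : ℝ} (ht' : 0 < t') (y' : ℝ) (v' : E) (t y : ℝ) (v : E) :
    siegelAutInv t' y' v' ∘ siegelAut t y v = fun p =>
      (((t / t' : ℝ) : ℂ) * p.1
          + (((‖v‖ ^ 2 + ‖v'‖ ^ 2 : ℝ) : ℂ) + ((y - y' : ℝ) : ℂ) * Complex.I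
              - 2 * ⟪v', v⟫_ℂ) / (t' : ℂ)
          + ⟪((2 * Real.sqrt t / t' : ℝ) : ℂ) • (v - v'), p.2⟫_ℂ,
        ((Real.sqrt t / Real.sqrt t' : ℝ) : ℂ) • p.2
          + (((Real.sqrt t')⁻¹ : ℝ) : ℂ) • (v - v')) := by
  ext1 ⟨z, w⟩
  have ht'0 : (t' : ℂ) ≠ 0 := by exact_mod_cast ht'.ne'
  simp only [Function.comp_apply, siegelAut, siegelAutInv, inner_add_right, inner_smul_right,
    inner_smul_left, inner_sub_left, Complex.conj_ofReal, Prod.mk.injEq]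
  constructor
  · push_cast; field_simp; ring
  · rw [add_sub_assoc, smul_add, smul_smul, ← Complex.ofReal_mul, div_eq_inv_mul]

theorem tendstoUniformlyOn_siegelAutInv_comp_siegelAut {t t' y y' : ℕ → ℝ} {v v' : ℕ → E}
    {r : ℝ} (ht : ∀ m, 0 < t m) (ht' : ∀ m, 0 < t' m)
    (hr : Tendsto (fun m => t m / t' m) atTop (𝓝 r))
    (hy : Tendsto (fun m => y m / t m) atTop (𝓝 0))
    (hv : Tendsto (fun m => ‖v m‖ ^ 2 / t m) atTop (𝓝 0))
    (hy' : Tendsto (fun m => y' m / t' m) atTop (𝓝 0))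
    (hv' : Tendsto (fun m => ‖v' m‖ ^ 2 / t' m) atTop (𝓝 0))
    {K : Set (ℂ × E)} (hK : Bornology.IsBounded K) :
    TendstoUniformlyOn (fun m => siegelAutInv (t' m) (y' m) (v' m) ∘ siegelAut (t m) (y m) (v m))
      (siegelAut r 0 0) atTop K := by
  simp only [siegelAutInv_comp_siegelAut (ht' _), siegelAut_zero_zero]
  have hofReal := Complex.continuous_ofReal.tendsto
  have hvv' : Tendsto (fun m => ‖v m‖ ^ 2 / t m * (t m / t' m) + ‖v' m‖ ^ 2 / t' m)
      atTop (𝓝 0) := by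
    simpa using (hv.mul hr).add hv'
  have hvv'_eq : ∀ m, ‖v m‖ ^ 2 / t m * (t m / t' m) + ‖v' m‖ ^ 2 / t' m
      = (‖v m‖ ^ 2 + ‖v' m‖ ^ 2) / t' m := fun m => by
    field_simp [(ht m).ne']
  refine tendstoUniformlyOn_affine hK ((hofReal r).comp hr) ((hofReal _).comp ?_) ?_ ?_ ?_
  · exact hr.sqrt.congr fun m => Real.sqrt_div' _ (ht' m).le
  · refine squeeze_zero_norm (fun m => ?_) (a := fun m =>
      (2 * (‖v m‖ ^ 2 / t m) + |y m / t m|) * (t m / t' m) + (2 * (‖v' m‖ ^ 2 / t' m) + |y' m / t' m|))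
      (by simpa using (((hv.const_mul 2).add hy.abs).mul hr).add ((hv'.const_mul 2).add hy'.abs))
    rw [norm_div, Complex.norm_real, Real.norm_of_nonneg (ht' m).le, abs_div, abs_div,
      abs_of_pos (ht m), abs_of_pos (ht' m)]
    calc _ ≤ (2 * ‖v m‖ ^ 2 + 2 * ‖v' m‖ ^ 2 + |y m| + |y' m|) / t' m := by
          gcongr
          · exact (ht' m).le
          · exact norm_ofReal_add_ofReal_mul_I_sub_two_inner_le _ _ _ _
      _ = _ := by field_simp [(ht m).ne']; ring
  · refine tendsto_zero_of_norm_sq_le (by simpa using (hr.const_mul 8).mul hvv') fun m => ?_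
    rw [norm_smul, Complex.norm_real, Real.norm_eq_abs, mul_pow, sq_abs, hvv'_eq]
    calc (2 * √(t m) / t' m) ^ 2 * ‖v m - v' m‖ ^ 2
        ≤ (2 * √(t m) / t' m) ^ 2 * (2 * (‖v m‖ ^ 2 + ‖v' m‖ ^ 2)) := by
          gcongr; exact norm_sub_sq_le_two_mul _ _
      _ = 8 * (t m / t' m) * ((‖v m‖ ^ 2 + ‖v' m‖ ^ 2) / t' m) := by
          rw [div_pow, mul_pow, Real.sq_sqrt (ht m).le]; field_simp; ring
  · refine tendsto_zero_of_norm_sq_le (by simpa using hvv'.const_mul 2) fun m => ?_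
    rw [norm_smul, Complex.norm_real, Real.norm_eq_abs, mul_pow, sq_abs, inv_pow,
      Real.sq_sqrt (ht' m).le, hvv'_eq]
    calc (t' m)⁻¹ * ‖v m - v' m‖ ^ 2 ≤ (t' m)⁻¹ * (2 * (‖v m‖ ^ 2 + ‖v' m‖ ^ 2)) :=
          mul_le_mul_of_nonneg_left (norm_sub_sq_le_two_mul _ _) (inv_nonneg.2 (ht' m).le)
      _ = 2 * ((‖v m‖ ^ 2 + ‖v' m‖ ^ 2) / t' m) := by ring

end SiegelAut

lemma bijOn_siegelAut {n : ℕ} {t : ℝ} (ht : 0 < t) (y : ℝ) (v : EuclideanSpace ℂ (Fin n)) :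
    Set.BijOn (siegelAut t y v) (siegel n) (siegel n) := by
  have hheight := re_sub_norm_sq_siegelAut ht.le y v
  refine Set.InvOn.bijOn ⟨fun p _ => leftInverse_siegelAutInv ht y v p,
    fun p _ => rightInverse_siegelAutInv ht y v p⟩ (fun p hp => ?_) (fun p hp => ?_)
  · rw [siegel, Set.mem_ofPred_eq, ← sub_pos, hheight]
    exact mul_pos ht (sub_pos.2 hp)
  · rw [siegel, Set.mem_ofPred_eq, ← sub_pos] at hp ⊢
    rw [← rightInverse_siegelAutInv ht y v p, hheight] at hp
    exact pos_of_mul_pos_right hp ht.le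

lemma tendsto_div_add_of_tendsto_div_succ {t : ℕ → ℝ} (ht : ∀ m, t m ≠ 0) {α : ℝ}
    (h : Tendsto (fun m => t m / t (m + 1)) atTop (𝓝 α)) (k : ℕ) :
    Tendsto (fun m => t m / t (m + k)) atTop (𝓝 (α ^ k)) := by
  induction k with
  | zero => simp [div_self (ht _)]
  | succ k ih =>
    refine (ih.mul (h.comp (tendsto_add_atTop_nat k))).congr fun m => ?_
    simp only [Function.comp_apply, add_assoc]
    exact div_mul_div_cancel₀ (ht _)

theorem stmt12_general {n : ℕ} (α : ℝ) (hα : 1 < α)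
    (Z : ℕ → ℂ × EuclideanSpace ℂ (Fin n)) (hZ : ∀ k, Z k ∈ siegel n)
    (t : ℕ → ℝ) (htdef : ∀ k, t k = ht (Z k))
    (him : Tendsto (fun k => (Z k).1.im / t k) atTop (𝓝 0))
    (hw : Tendsto (fun k => ‖(Z k).2‖ ^ 2 / t k) atTop (𝓝 0))
    (htr : Tendsto (fun k => t k / t (k + 1)) atTop (𝓝 α))
    (τ σ : ℕ → ℂ × EuclideanSpace ℂ (Fin n) → ℂ × EuclideanSpace ℂ (Fin n))
    (hτ : ∀ (k : ℕ) (z : ℂ) (w : EuclideanSpace ℂ (Fin n)), τ k (z, w) =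
      ((t k : ℂ) * z + ((‖(Z k).2‖ ^ 2 : ℝ) : ℂ) + ((Z k).1.im : ℂ) * Complex.I
          + 2 * ((Real.sqrt (t k) : ℝ) : ℂ) * hip' w (Z k).2,
        ((Real.sqrt (t k) : ℝ) : ℂ) • w + (Z k).2))
    (hσ : ∀ (k : ℕ) (z : ℂ) (w : EuclideanSpace ℂ (Fin n)), σ k (z, w) =
      ((z + ((‖(Z k).2‖ ^ 2 : ℝ) : ℂ) - ((Z k).1.im : ℂ) * Complex.I
          - 2 * hip' w (Z k).2) / (t k : ℂ),
        (((Real.sqrt (t k))⁻¹ : ℝ) : ℂ) • (w - (Z k).2)))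
    (η : ℕ → ℂ × EuclideanSpace ℂ (Fin n) → ℂ × EuclideanSpace ℂ (Fin n))
    (hη : ∀ (k : ℕ) (z : ℂ) (w : EuclideanSpace ℂ (Fin n)), η k (z, w) =
      (((α ^ k : ℝ) : ℂ) * z, (((Real.sqrt α ^ k : ℝ)) : ℂ) • w))
    (ηinv : ℂ × EuclideanSpace ℂ (Fin n) → ℂ × EuclideanSpace ℂ (Fin n))
    (hηinv : ∀ (z : ℂ) (w : EuclideanSpace ℂ (Fin n)), ηinv (z, w) =
      (((α⁻¹ : ℝ) : ℂ) * z, ((((Real.sqrt α)⁻¹ : ℝ)) : ℂ) • w)) :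
    (∀ k, Differentiable ℂ (τ k) ∧ Differentiable ℂ (σ k) ∧
      Function.LeftInverse (σ k) (τ k) ∧ Function.RightInverse (σ k) (τ k) ∧
      Set.BijOn (τ k) (siegel n) (siegel n)) ∧
    (∀ k : ℕ, 1 ≤ k → ∀ K : Set (ℂ × EuclideanSpace ℂ (Fin n)), K ⊆ siegel n →
      IsCompact K →
      TendstoUniformlyOn (fun m => σ (m + k) ∘ τ m) (η k) atTop K) ∧
    (∀ K : Set (ℂ × EuclideanSpace ℂ (Fin n)), K ⊆ siegel n → IsCompact K →
      TendstoUniformlyOn (fun m => σ (m + 1) ∘ ηinv ∘ τ m) id atTop K) := by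
  have hpos (k : ℕ) : 0 < t k := by rw [htdef k]; exact sub_pos.2 (hZ k)
  have hα0 : 0 < α := by linarith
  obtain rfl : τ = fun k => siegelAut (t k) (Z k).1.im (Z k).2 :=
    funext fun k => funext fun ⟨z, w⟩ => hτ k z w
  obtain rfl : σ = fun k => siegelAutInv (t k) (Z k).1.im (Z k).2 :=
    funext fun k => funext fun ⟨z, w⟩ => hσ k z w
  obtain rfl : η = fun k => siegelAut (α ^ k) 0 0 := by
    have hsqrt (k : ℕ) : Real.sqrt (α ^ k) = Real.sqrt α ^ k :=
      (Real.sqrt_eq_iff_eq_sq (by positivity) (by positivity)).2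
        (by rw [← pow_mul, mul_comm, pow_mul, Real.sq_sqrt hα0.le])
    ext1 k; ext1 ⟨z, w⟩; rw [hη, siegelAut_zero_zero, hsqrt]
  obtain rfl : ηinv = siegelAut α⁻¹ 0 0 := by
    ext1 ⟨z, w⟩; rw [hηinv, siegelAut_zero_zero, Real.sqrt_inv]
  refine ⟨fun k => ⟨differentiable_siegelAut _ _ _, differentiable_siegelAutInv _ _ _,
      leftInverse_siegelAutInv (hpos k) _ _, rightInverse_siegelAutInv (hpos k) _ _,
      bijOn_siegelAut (hpos k) _ _⟩, fun k _ K _ hK => ?_, fun K _ hK => ?_⟩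
  · exact tendstoUniformlyOn_siegelAutInv_comp_siegelAut hpos (fun m => hpos (m + k))
      (tendsto_div_add_of_tendsto_div_succ (fun m => (hpos m).ne') htr k) him hw
      (him.comp (tendsto_add_atTop_nat k)) (hw.comp (tendsto_add_atTop_nat k)) hK.isBounded
  · simp only [siegelAut_zero_zero_comp_siegelAut (inv_nonneg.2 hα0.le)]
    rw [← siegelAut_one_zero_zero]
    refine tendstoUniformlyOn_siegelAutInv_comp_siegelAut (fun m => mul_pos (inv_pos.2 hα0) (hpos m))
      (fun m => hpos (m + 1)) ?_ ?_ ?_ (him.comp (tendsto_add_atTop_nat 1))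
      (hw.comp (tendsto_add_atTop_nat 1)) hK.isBounded
    · simpa [mul_div_assoc, hα0.ne'] using htr.const_mul α⁻¹
    · exact him.congr fun m => (mul_div_mul_left _ _ (inv_ne_zero hα0.ne')).symm
    · refine hw.congr fun m => ?_
      rw [norm_smul, Complex.norm_real, Real.norm_of_nonneg (Real.sqrt_nonneg _), mul_pow,
        Real.sq_sqrt (inv_nonneg.2 hα0.le), mul_div_mul_left _ _ (inv_ne_zero hα0.ne')]

/-- the automorphisms `τ_n(z,w) = (t_n z + ‖w_n‖² + i y_n + 2√t_n⟨w,w_n⟩,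
√t_n w + w_n)` of `H^N` (with explicit inverses `σ_n`) satisfy:
(1) `τ_{n+k}⁻¹ ∘ τ_n → η_k` uniformly on compacta of `H^N`, where
`η_k(z,w) = (α^k z, α^{k/2} w)`; and
(2) `τ_{n+1}⁻¹ ∘ η_1⁻¹ ∘ τ_n → id` uniformly on compacta of `H^N`. -/
theorem stmt12 {n : ℕ} (α : ℝ) (hα : 1 < α)
    (Z : ℕ → ℂ × EuclideanSpace ℂ (Fin n)) (hZ : ∀ k, Z k ∈ siegel n)
    (t : ℕ → ℝ) (htdef : ∀ k, t k = ht (Z k))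
    (hre : Tendsto (fun k => (Z k).1.re / t k) atTop (𝓝 1))
    (him : Tendsto (fun k => (Z k).1.im / t k) atTop (𝓝 0))
    (hw : Tendsto (fun k => ‖(Z k).2‖ ^ 2 / t k) atTop (𝓝 0))
    (htr : Tendsto (fun k => t k / t (k + 1)) atTop (𝓝 α))
    (τ σ : ℕ → ℂ × EuclideanSpace ℂ (Fin n) → ℂ × EuclideanSpace ℂ (Fin n))
    (hτ : ∀ (k : ℕ) (z : ℂ) (w : EuclideanSpace ℂ (Fin n)), τ k (z, w) =
      ((t k : ℂ) * z + ((‖(Z k).2‖ ^ 2 : ℝ) : ℂ) + ((Z k).1.im : ℂ) * Complex.I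
          + 2 * ((Real.sqrt (t k) : ℝ) : ℂ) * hip' w (Z k).2,
        ((Real.sqrt (t k) : ℝ) : ℂ) • w + (Z k).2))
    (hσ : ∀ (k : ℕ) (z : ℂ) (w : EuclideanSpace ℂ (Fin n)), σ k (z, w) =
      ((z + ((‖(Z k).2‖ ^ 2 : ℝ) : ℂ) - ((Z k).1.im : ℂ) * Complex.I
          - 2 * hip' w (Z k).2) / (t k : ℂ),
        (((Real.sqrt (t k))⁻¹ : ℝ) : ℂ) • (w - (Z k).2)))
    (η : ℕ → ℂ × EuclideanSpace ℂ (Fin n) → ℂ × EuclideanSpace ℂ (Fin n))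
    (hη : ∀ (k : ℕ) (z : ℂ) (w : EuclideanSpace ℂ (Fin n)), η k (z, w) =
      (((α ^ k : ℝ) : ℂ) * z, (((Real.sqrt α ^ k : ℝ)) : ℂ) • w))
    (ηinv : ℂ × EuclideanSpace ℂ (Fin n) → ℂ × EuclideanSpace ℂ (Fin n))
    (hηinv : ∀ (z : ℂ) (w : EuclideanSpace ℂ (Fin n)), ηinv (z, w) =
      (((α⁻¹ : ℝ) : ℂ) * z, ((((Real.sqrt α)⁻¹ : ℝ)) : ℂ) • w)) :
    (∀ k, Differentiable ℂ (τ k) ∧ Differentiable ℂ (σ k) ∧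
      Function.LeftInverse (σ k) (τ k) ∧ Function.RightInverse (σ k) (τ k) ∧
      Set.BijOn (τ k) (siegel n) (siegel n)) ∧
    (∀ k : ℕ, 1 ≤ k → ∀ K : Set (ℂ × EuclideanSpace ℂ (Fin n)), K ⊆ siegel n →
      IsCompact K →
      TendstoUniformlyOn (fun m => σ (m + k) ∘ τ m) (η k) atTop K) ∧
    (∀ K : Set (ℂ × EuclideanSpace ℂ (Fin n)), K ⊆ siegel n → IsCompact K →
      TendstoUniformlyOn (fun m => σ (m + 1) ∘ ηinv ∘ τ m) id atTop K) :=
  stmt12_general α hα Z hZ t htdef him hw htr τ σ hτ hσ η hη ηinv hηinv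
end
end

section
/- Let N ≥ 1, let z₀ ∈ ℂ with Re z₀ > 0, and let t_n > 0 be a sequence of positive reals. Let (u_n, v_n) and (ũ_n, ṽ_n) be sequences in H^N such that u_n/t_n → z₀, ũ_n/t_n → z₀, ‖v_n‖²/t_n → 0 and ‖ṽ_n‖²/t_n → 0 as n → ∞. Then the pseudo-hyperbolic distance d((u_n,v_n),(ũ_n,ṽ_n)) → 0 as n → ∞. -/
noncomputable section

open Filter Topology

/-! The pseudo-hyperbolic distance is invariant under the non-isotropic dilations
`(z, w) ↦ (z / t, w / √t)`, `t > 0`, of the Siegel domain. Dilating the `k`-th pair by `t_k`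
makes both sequences converge to the point `(z₀, 0)` of `H^N`, and `d` is continuous at the
diagonal point `((z₀, 0), (z₀, 0))`, where it vanishes. -/

def siegelKernel {n : ℕ} (Z W : ℂ × EuclideanSpace ℂ (Fin n)) : ℂ :=
  Z.1 + (starRingEnd ℂ) W.1 - 2 * hip' Z.2 W.2

def siegelDilation {n : ℕ} (t : ℝ) (Z : ℂ × EuclideanSpace ℂ (Fin n)) :
    ℂ × EuclideanSpace ℂ (Fin n) :=
  ((t : ℂ)⁻¹ * Z.1, ((Real.sqrt t : ℂ))⁻¹ • Z.2)

section

variable {n : ℕ}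

theorem sphd_eq (Z W : ℂ × EuclideanSpace ℂ (Fin n)) :
    sphd Z W = Real.sqrt (1 - 4 * ht Z * ht W / ‖siegelKernel Z W‖ ^ 2) := rfl

theorem ht_pos_of_mem_siegel {Z : ℂ × EuclideanSpace ℂ (Fin n)} (hZ : Z ∈ siegel n) :
    0 < ht Z :=
  sub_pos.2 hZ

theorem ht_siegelDilation {t : ℝ} (ht0 : 0 < t) (Z : ℂ × EuclideanSpace ℂ (Fin n)) :
    ht (siegelDilation t Z) = ht Z / t := by
  simp only [ht, siegelDilation, norm_smul, mul_pow, norm_inv, Complex.norm_real,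
    Real.norm_of_nonneg (Real.sqrt_nonneg t), inv_pow, Real.sq_sqrt ht0.le, ← Complex.ofReal_inv,
    Complex.re_ofReal_mul]
  ring

theorem siegelKernel_siegelDilation {t : ℝ} (ht0 : 0 < t) (Z W : ℂ × EuclideanSpace ℂ (Fin n)) :
    siegelKernel (siegelDilation t Z) (siegelDilation t W) = siegelKernel Z W / t := by
  simp only [siegelKernel, siegelDilation, hip', inner_smul_left, inner_smul_right, map_mul,
    map_inv₀, Complex.conj_ofReal]
  have hsqrt : ((Real.sqrt t : ℂ))⁻¹ * ((Real.sqrt t : ℂ))⁻¹ = (t : ℂ)⁻¹ := by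
    rw [← mul_inv, ← Complex.ofReal_mul, Real.mul_self_sqrt ht0.le]
  linear_combination (-2 * inner ℂ W.2 Z.2) * hsqrt

theorem sphd_siegelDilation {t : ℝ} (ht0 : 0 < t) (Z W : ℂ × EuclideanSpace ℂ (Fin n)) :
    sphd (siegelDilation t Z) (siegelDilation t W) = sphd Z W := by
  rw [sphd_eq, sphd_eq, ht_siegelDilation ht0, ht_siegelDilation ht0,
    siegelKernel_siegelDilation ht0, norm_div, Complex.norm_real, Real.norm_of_nonneg ht0.le]
  by_cases h : ‖siegelKernel Z W‖ = 0
  · simp [h]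
  · field_simp

theorem siegelKernel_self (Z : ℂ × EuclideanSpace ℂ (Fin n)) :
    siegelKernel Z Z = 2 * ht Z := by
  rw [siegelKernel, hip', inner_self_eq_norm_sq_to_K, RCLike.ofReal_eq_complex_ofReal,
    Complex.add_conj, ht]
  push_cast
  ring

theorem norm_siegelKernel_self {Z : ℂ × EuclideanSpace ℂ (Fin n)} (hZ : Z ∈ siegel n) :
    ‖siegelKernel Z Z‖ = 2 * ht Z := by
  rw [siegelKernel_self, norm_mul, Complex.norm_real,
    Real.norm_of_nonneg (ht_pos_of_mem_siegel hZ).le, Complex.norm_two]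

theorem sphd_self {Z : ℂ × EuclideanSpace ℂ (Fin n)} (hZ : Z ∈ siegel n) : sphd Z Z = 0 := by
  have hpos := ht_pos_of_mem_siegel hZ
  rw [sphd_eq, norm_siegelKernel_self hZ, Real.sqrt_eq_zero', sub_nonpos]
  field_simp
  linarith

theorem continuousAt_sphd {Z : ℂ × EuclideanSpace ℂ (Fin n)} (hZ : Z ∈ siegel n) :
    ContinuousAt (fun P : (ℂ × EuclideanSpace ℂ (Fin n)) × (ℂ × EuclideanSpace ℂ (Fin n)) =>
      sphd P.1 P.2) (Z, Z) := by
  have hden : ‖siegelKernel Z Z‖ ^ 2 ≠ 0 := by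
    have := ht_pos_of_mem_siegel hZ
    rw [norm_siegelKernel_self hZ]
    positivity
  simp only [sphd_eq]
  unfold ht siegelKernel hip'
  fun_prop (disch := exact hden)

theorem tendsto_siegelDilation {ι : Type*} {l : Filter ι} {z₀ : ℂ} {t : ι → ℝ}
    (htpos : ∀ k, 0 < t k) {U : ι → ℂ × EuclideanSpace ℂ (Fin n)}
    (hu : Tendsto (fun k => (U k).1 / (t k : ℂ)) l (𝓝 z₀))
    (hu2 : Tendsto (fun k => ‖(U k).2‖ ^ 2 / t k) l (𝓝 0)) :
    Tendsto (fun k => siegelDilation (t k) (U k)) l (𝓝 (z₀, 0)) := by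
  refine Tendsto.prodMk_nhds ?_ ?_
  · simpa only [siegelDilation, inv_mul_eq_div] using hu
  · rw [tendsto_zero_iff_norm_tendsto_zero]
    have hnorm : ∀ k,
        ‖((Real.sqrt (t k) : ℂ))⁻¹ • (U k).2‖ = Real.sqrt (‖(U k).2‖ ^ 2 / t k) := fun k => by
      rw [norm_smul, norm_inv, Complex.norm_real, Real.norm_of_nonneg (Real.sqrt_nonneg _),
        Real.sqrt_div' _ (htpos k).le, Real.sqrt_sq (norm_nonneg _), inv_mul_eq_div]
    simpa only [siegelDilation, hnorm, Real.sqrt_zero] using hu2.sqrt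

end

theorem stmt13_general {n : ℕ} (z₀ : ℂ) (hz₀ : 0 < z₀.re)
    (t : ℕ → ℝ) (htpos : ∀ k, 0 < t k)
    (U V : ℕ → ℂ × EuclideanSpace ℂ (Fin n))
    (hu : Tendsto (fun k => (U k).1 / (t k : ℂ)) atTop (𝓝 z₀))
    (hv : Tendsto (fun k => (V k).1 / (t k : ℂ)) atTop (𝓝 z₀))
    (hu2 : Tendsto (fun k => ‖(U k).2‖ ^ 2 / t k) atTop (𝓝 0))
    (hv2 : Tendsto (fun k => ‖(V k).2‖ ^ 2 / t k) atTop (𝓝 0)) :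
    Tendsto (fun k => sphd (U k) (V k)) atTop (𝓝 0) := by
  have hbase : ((z₀, 0) : ℂ × EuclideanSpace ℂ (Fin n)) ∈ siegel n := by
    simpa [siegel] using hz₀
  have hlim := (continuousAt_sphd hbase).tendsto.comp
    ((tendsto_siegelDilation htpos hu hu2).prodMk_nhds (tendsto_siegelDilation htpos hv hv2))
  rw [sphd_self hbase] at hlim
  simpa only [Function.comp_def, sphd_siegelDilation (htpos _)] using hlim

/-- if `(u_n,v_n)` and `(ũ_n,ṽ_n)` are sequences in the Siegel domain with
`u_n/t_n → z₀`, `ũ_n/t_n → z₀` (where `Re z₀ > 0`) and `‖v_n‖²/t_n → 0`, `‖ṽ_n‖²/t_n → 0`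
for some positive reals `t_n`, then the pseudo-hyperbolic distance between them tends
to `0`. -/
theorem stmt13 {n : ℕ} (z₀ : ℂ) (hz₀ : 0 < z₀.re)
    (t : ℕ → ℝ) (htpos : ∀ k, 0 < t k)
    (U V : ℕ → ℂ × EuclideanSpace ℂ (Fin n))
    (hU : ∀ k, U k ∈ siegel n) (hV : ∀ k, V k ∈ siegel n)
    (hu : Tendsto (fun k => (U k).1 / (t k : ℂ)) atTop (𝓝 z₀))
    (hv : Tendsto (fun k => (V k).1 / (t k : ℂ)) atTop (𝓝 z₀))
    (hu2 : Tendsto (fun k => ‖(U k).2‖ ^ 2 / t k) atTop (𝓝 0))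
    (hv2 : Tendsto (fun k => ‖(V k).2‖ ^ 2 / t k) atTop (𝓝 0)) :
    Tendsto (fun k => sphd (U k) (V k)) atTop (𝓝 0) :=
  stmt13_general z₀ hz₀ t htpos U V hu hv hu2 hv2
end
end

section
/- Let f : ℂ² → ℂ² be a quadratic polynomial map fixing the origin, i.e. f(z,w) = (a₁z + a₂w + a₃z² + a₄zw + a₅w², b₁z + b₂w + b₃z² + b₄zw + b₅w²) for some complex coefficients a₁,…,a₅, b₁,…,b₅. Then f(H²) ⊆ H² if and only if there exist a real number A > 0 and complex numbers B, C with A − |B| ≥ |C|² such that f(z,w) = (Az + Bw², Cw) for all (z,w) ∈ ℂ². -/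
/-!
A polynomial self-map `f = (p, q)` of `H²` extends continuously to its closure
`{‖w‖² ≤ Re z}`, so `‖q‖² ≤ Re p` there. Testing this on `w = 0, Re z ≥ 0` and on the curves
`t ↦ (t², t u)` with `‖u‖ ≤ 1`, and comparing the lowest and the highest powers of `t`
(`t → 0` and `t → ∞`), kills every coefficient except `a₁`, which must be real, `a₅` and `b₂`.
The bound `‖b₂‖² ≤ a₁ - ‖a₅‖` is the inequality at `(1, u)` with `a₅ u² = -‖a₅‖`. Conversely,
this bound gives `‖C w‖² ≤ A ‖w‖² + Re (B w²) < Re (A z + B w²)` on `H²`.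
-/

open Set Filter Topology Complex

/-- The two-dimensional Siegel domain `H² = {(z,w) ∈ ℂ² : Re z > |w|²}`. -/
def siegel2 : Set (ℂ × ℂ) := {Z | ‖Z.2‖ ^ 2 < Z.1.re}

lemma le_at_zero_of_forall_pos_le {f g : ℝ → ℝ} (hf : Continuous f) (hg : Continuous g)
    (h : ∀ t : ℝ, 0 < t → f t ≤ g t) : f 0 ≤ g 0 :=
  le_of_tendsto_of_tendsto ((hf.tendsto 0).mono_left (nhdsWithin_le_nhds (s := Ioi 0)))
    ((hg.tendsto 0).mono_left nhdsWithin_le_nhds) (eventually_nhdsWithin_of_forall h)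

lemma linear_coeff_nonneg_of_cubic_nonneg {c₁ c₂ c₃ : ℝ}
    (h : ∀ t : ℝ, 0 < t → 0 ≤ c₁ * t + c₂ * t ^ 2 + c₃ * t ^ 3) : 0 ≤ c₁ := by
  simpa using le_at_zero_of_forall_pos_le continuous_const
    (show Continuous fun t : ℝ => c₁ + c₂ * t + c₃ * t ^ 2 by fun_prop) fun t ht =>
      nonneg_of_mul_nonneg_right (by linarith [h t ht]) ht

lemma leading_coeff_nonneg_of_cubic_nonneg {c₁ c₂ c₃ : ℝ}
    (h : ∀ t : ℝ, 0 < t → 0 ≤ c₁ * t + c₂ * t ^ 2 + c₃ * t ^ 3) : 0 ≤ c₃ := by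
  refine linear_coeff_nonneg_of_cubic_nonneg (c₂ := c₂) (c₃ := c₁) fun t ht => ?_
  have e : c₃ * t + c₂ * t ^ 2 + c₁ * t ^ 3 =
      t ^ 4 * (c₁ * t⁻¹ + c₂ * t⁻¹ ^ 2 + c₃ * t⁻¹ ^ 3) := by
    field_simp
    ring
  rw [e]
  exact mul_nonneg (by positivity) (h t⁻¹ (inv_pos.2 ht))

lemma coeffs_eq_zero_of_mul_norm_sq_le_quadratic {x y z : ℂ} {c₀ c₁ c₂ : ℝ}
    (h : ∀ t : ℝ, 0 < t → t * ‖x + y * t + z * t ^ 2‖ ^ 2 ≤ c₀ + c₁ * t + c₂ * t ^ 2) :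
    y = 0 ∧ z = 0 := by
  have hs : ∀ s : ℝ, 0 < s →
      ‖x * s ^ 2 + y * s + z‖ ^ 2 ≤ s ^ 3 * (c₀ * s ^ 2 + c₁ * s + c₂) := by
    intro s hs
    have hs' : (s : ℂ) ≠ 0 := by exact_mod_cast hs.ne'
    have e : x * s ^ 2 + y * s + z =
        ((s ^ 2 : ℝ) : ℂ) * (x + y * (s⁻¹ : ℝ) + z * (s⁻¹ : ℝ) ^ 2) := by
      push_cast
      field_simp
    have e' : s ^ 3 * (c₀ * s ^ 2 + c₁ * s + c₂) =
        s ^ 5 * (c₀ + c₁ * s⁻¹ + c₂ * s⁻¹ ^ 2) := by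
      field_simp
    have key := mul_le_mul_of_nonneg_left (h s⁻¹ (inv_pos.2 hs)) (pow_nonneg hs.le 5)
    rw [e, e', norm_mul, mul_pow, Complex.norm_real, Real.norm_of_nonneg (by positivity)]
    refine (le_of_eq ?_).trans key
    field_simp
  have hz : z = 0 := by
    simpa using le_at_zero_of_forall_pos_le (by fun_prop) (by fun_prop) hs
  subst hz
  refine ⟨?_, rfl⟩
  have hs' : ∀ s : ℝ, 0 < s → ‖x * s + y‖ ^ 2 ≤ s * (c₀ * s ^ 2 + c₁ * s + c₂) := by
    intro s hs₀
    have := hs s hs₀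
    rw [show x * s ^ 2 + y * s + 0 = (s : ℂ) * (x * s + y) by ring, norm_mul, mul_pow,
      Complex.norm_real, Real.norm_of_nonneg hs₀.le] at this
    nlinarith [pow_pos hs₀ 2]
  simpa using le_at_zero_of_forall_pos_le (by fun_prop) (by fun_prop) hs'

lemma exists_re_nonneg_sq_eq (v : ℂ) : ∃ u : ℂ, 0 ≤ u.re ∧ u ^ 2 = v := by
  obtain ⟨u, hu⟩ := IsAlgClosed.exists_pow_nat_eq v two_pos
  rcases le_total 0 u.re with h | h
  · exact ⟨u, h, hu⟩
  · exact ⟨-u, by simpa using h, by rw [neg_sq, hu]⟩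

lemma eq_zero_of_forall_norm_le_one_re_mul_nonneg {a : ℂ}
    (h : ∀ u : ℂ, ‖u‖ ≤ 1 → 0 ≤ (a * u).re) : a = 0 := by
  have h₁ := h 1 (by simp)
  have h₂ := h (-1) (by simp)
  have h₃ := h I (by simp)
  have h₄ := h (-I) (by simp)
  simp only [mul_one, mul_neg, neg_re, mul_I_re] at h₁ h₂ h₃ h₄
  exact Complex.ext (by simp; linarith) (by simp; linarith)

lemma exists_norm_eq_one_re_mul_sq_eq_neg_norm (c : ℂ) :
    ∃ u : ℂ, ‖u‖ = 1 ∧ (c * u ^ 2).re = -‖c‖ := by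
  rcases eq_or_ne c 0 with rfl | hc
  · exact ⟨1, by simp, by simp⟩
  obtain ⟨u, hu⟩ := IsAlgClosed.exists_pow_nat_eq (-(starRingEnd ℂ c) / ‖c‖) two_pos
  have hc' : (‖c‖ : ℂ) ≠ 0 := by exact_mod_cast norm_ne_zero_iff.2 hc
  refine ⟨u, ?_, ?_⟩
  · rw [← pow_left_inj₀ (norm_nonneg u) zero_le_one two_ne_zero, ← norm_pow, hu]
    simp [hc]
  · rw [hu, mul_div_assoc', mul_neg, mul_conj, normSq_eq_norm_sq]
    rw [show -((‖c‖ ^ 2 : ℝ) : ℂ) / ‖c‖ = ((-‖c‖ : ℝ) : ℂ) by push_cast; field_simp]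
    exact ofReal_re _

lemma sq_coeff_eq_zero_of_re_nonneg {a c : ℂ}
    (h : ∀ z : ℂ, 0 ≤ z.re → 0 ≤ (a * z + c * z ^ 2).re) : c = 0 := by
  refine eq_zero_of_forall_norm_le_one_re_mul_nonneg fun v _ => ?_
  obtain ⟨u, hu, rfl⟩ := exists_re_nonneg_sq_eq v
  refine leading_coeff_nonneg_of_cubic_nonneg (c₁ := 0) (c₂ := (a * u).re) fun t ht => ?_
  have e : a * (t * u) + c * (t * u) ^ 2 = (t : ℂ) * (a * u) + ((t ^ 2 : ℝ) : ℂ) * (c * u ^ 2) := by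
    push_cast
    ring
  have := mul_nonneg ht.le (h (t * u) (by simpa using mul_nonneg ht.le hu))
  rw [e, add_re, re_ofReal_mul, re_ofReal_mul] at this
  exact this.trans_eq (by ring)

lemma coeffs_eq_zero_of_norm_sq_le_re_on_right_half_plane {a₁ a₃ b₁ b₃ : ℂ}
    (h : ∀ z : ℂ, 0 ≤ z.re → ‖b₁ * z + b₃ * z ^ 2‖ ^ 2 ≤ (a₁ * z + a₃ * z ^ 2).re) :
    a₃ = 0 ∧ a₁.im = 0 ∧ b₁ = 0 ∧ b₃ = 0 := by
  have hre : ∀ z : ℂ, 0 ≤ z.re → 0 ≤ (a₁ * z + a₃ * z ^ 2).re :=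
    fun z hz => (sq_nonneg _).trans (h z hz)
  have ha₃ : a₃ = 0 := sq_coeff_eq_zero_of_re_nonneg hre
  subst ha₃
  have hI := hre I (by simp)
  have hI' := hre (-I) (by simp)
  simp only [zero_mul, add_zero, mul_neg, neg_re, mul_I_re] at hI hI'
  obtain ⟨hb₁, hb₃⟩ := coeffs_eq_zero_of_mul_norm_sq_le_quadratic (x := 0) (y := b₁) (z := b₃)
    (c₀ := 0) (c₁ := 0) (c₂ := a₁.re) fun t ht => by
      have := h t (by simp [ht.le])
      simp only [zero_mul, add_zero, re_mul_ofReal] at this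
      simp only [zero_add, zero_mul]
      nlinarith
  exact ⟨rfl, by linarith, hb₁, hb₃⟩

lemma coeffs_eq_zero_of_norm_sq_le_re_on_closure_siegel2 {a₁ a₂ a₄ a₅ b₂ b₄ b₅ : ℂ}
    (h : ∀ z w : ℂ, ‖w‖ ^ 2 ≤ z.re → ‖b₂ * w + b₄ * z * w + b₅ * w ^ 2‖ ^ 2 ≤
      (a₁ * z + a₂ * w + a₄ * z * w + a₅ * w ^ 2).re) :
    a₂ = 0 ∧ a₄ = 0 ∧ b₄ = 0 ∧ b₅ = 0 := by
  have hcurve : ∀ u : ℂ, ‖u‖ ≤ 1 → ∀ t : ℝ, 0 < t →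
      t ^ 2 * ‖u‖ ^ 2 * ‖b₂ + b₅ * u * t + b₄ * t ^ 2‖ ^ 2 ≤
        (a₂ * u).re * t + (a₁ + a₅ * u ^ 2).re * t ^ 2 + (a₄ * u).re * t ^ 3 := by
    intro u hu t ht
    have hmem : ‖t * u‖ ^ 2 ≤ ((t ^ 2 : ℝ) : ℂ).re := by
      rw [norm_mul, norm_real, Real.norm_of_nonneg ht.le, ofReal_re]
      nlinarith [pow_le_one₀ (n := 2) (norm_nonneg u) hu]
    have eQ : b₂ * (t * u) + b₄ * ((t ^ 2 : ℝ) : ℂ) * (t * u) + b₅ * (t * u) ^ 2 =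
        (t : ℂ) * u * (b₂ + b₅ * u * t + b₄ * t ^ 2) := by
      push_cast
      ring
    have eP : a₁ * ((t ^ 2 : ℝ) : ℂ) + a₂ * (t * u) + a₄ * ((t ^ 2 : ℝ) : ℂ) * (t * u) +
        a₅ * (t * u) ^ 2 = (t : ℂ) * (a₂ * u) + ((t ^ 2 : ℝ) : ℂ) * (a₁ + a₅ * u ^ 2) +
          ((t ^ 3 : ℝ) : ℂ) * (a₄ * u) := by
      push_cast
      ring
    have := h _ _ hmem
    rw [eQ, eP, norm_mul, norm_mul, norm_real, Real.norm_of_nonneg ht.le, add_re, add_re,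
      re_ofReal_mul, re_ofReal_mul, re_ofReal_mul] at this
    linarith
  obtain ⟨hb₅, hb₄⟩ := coeffs_eq_zero_of_mul_norm_sq_le_quadratic (x := b₂) (y := b₅)
    (z := b₄) (c₀ := a₂.re) (c₁ := (a₁ + a₅).re) (c₂ := a₄.re) fun t ht => by
      have := hcurve 1 (by simp) t ht
      simp only [norm_one, one_pow, mul_one] at this
      refine le_of_mul_le_mul_left ?_ ht
      linarith
  subst hb₄ hb₅
  have hlow : ∀ u : ℂ, ‖u‖ ≤ 1 → 0 ≤ (a₂ * u).re ∧ 0 ≤ (a₄ * u).re := fun u hu =>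
    have hcubic := fun t ht => (by positivity : (0 : ℝ) ≤ _).trans (hcurve u hu t ht)
    ⟨linear_coeff_nonneg_of_cubic_nonneg hcubic, leading_coeff_nonneg_of_cubic_nonneg hcubic⟩
  exact ⟨eq_zero_of_forall_norm_le_one_re_mul_nonneg fun u hu => (hlow u hu).1,
    eq_zero_of_forall_norm_le_one_re_mul_nonneg fun u hu => (hlow u hu).2, rfl, rfl⟩

lemma closure_siegel2 : closure siegel2 = {Z : ℂ × ℂ | ‖Z.2‖ ^ 2 ≤ Z.1.re} := by
  refine Subset.antisymm
    (closure_minimal (fun Z (hZ : ‖Z.2‖ ^ 2 < Z.1.re) => hZ.le)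
      (isClosed_le (by fun_prop) (by fun_prop)))
    fun Z hZ => mem_closure_of_tendsto (f := fun t : ℝ => (Z.1 + t, Z.2)) (b := 𝓝[>] 0) ?_ ?_
  · have : Tendsto (fun t : ℝ => (Z.1 + t, Z.2)) (𝓝 0) (𝓝 Z) := by
      simpa using (show Continuous fun t : ℝ => (Z.1 + t, Z.2) by fun_prop).tendsto 0
    exact this.mono_left nhdsWithin_le_nhds
  · refine eventually_nhdsWithin_of_forall fun t ht => ?_
    show ‖Z.2‖ ^ 2 < (Z.1 + t).re
    simp only [add_re, ofReal_re]
    linarith [show ‖Z.2‖ ^ 2 ≤ Z.1.re from hZ, mem_Ioi.1 ht]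

lemma mapsTo_siegel2 {A : ℝ} {B C : ℂ} (hA : 0 < A) (h : ‖C‖ ^ 2 ≤ A - ‖B‖) :
    MapsTo (fun Z : ℂ × ℂ => ((A : ℂ) * Z.1 + B * Z.2 ^ 2, C * Z.2)) siegel2 siegel2 := by
  rintro ⟨z, w⟩ (hzw : ‖w‖ ^ 2 < z.re)
  show ‖C * w‖ ^ 2 < ((A : ℂ) * z + B * w ^ 2).re
  have hB : -(‖B‖ * ‖w‖ ^ 2) ≤ (B * w ^ 2).re := by
    have := neg_le_of_abs_le (abs_re_le_norm (B * w ^ 2))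
    rwa [norm_mul, norm_pow] at this
  rw [add_re, re_ofReal_mul, norm_mul, mul_pow]
  nlinarith [mul_le_mul_of_nonneg_right h (sq_nonneg ‖w‖), norm_nonneg B]

lemma norm_sq_le_re_of_mapsTo_siegel2 {g : ℂ × ℂ → ℂ × ℂ} (hg : Continuous g)
    (h : MapsTo g siegel2 siegel2) {Z : ℂ × ℂ} (hZ : ‖Z.2‖ ^ 2 ≤ Z.1.re) :
    ‖(g Z).2‖ ^ 2 ≤ (g Z).1.re := by
  have := h.closure hg (closure_siegel2 ▸ hZ : Z ∈ closure siegel2)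
  rwa [closure_siegel2] at this

/-- a quadratic polynomial self-map of `ℂ²` fixing the origin maps `H²`
into itself if and only if it has the form `f(z,w) = (Az + Bw², Cw)` with `A` real,
`A > 0` and `A − |B| ≥ |C|²`. -/
theorem stmt16 (f : ℂ × ℂ → ℂ × ℂ) (a₁ a₂ a₃ a₄ a₅ b₁ b₂ b₃ b₄ b₅ : ℂ)
    (hf : ∀ z w : ℂ, f (z, w) =
      (a₁ * z + a₂ * w + a₃ * z ^ 2 + a₄ * z * w + a₅ * w ^ 2,
       b₁ * z + b₂ * w + b₃ * z ^ 2 + b₄ * z * w + b₅ * w ^ 2)) :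
    (∀ Z ∈ siegel2, f Z ∈ siegel2) ↔
    ∃ (A : ℝ) (B C : ℂ), 0 < A ∧ ‖C‖ ^ 2 ≤ A - ‖B‖ ∧
      ∀ z w : ℂ, f (z, w) = ((A : ℂ) * z + B * w ^ 2, C * w) := by
  constructor
  · intro h
    have hcont : Continuous f := by
      rw [show f = _ from funext fun Z : ℂ × ℂ => hf Z.1 Z.2]
      fun_prop
    have hcl : ∀ z w : ℂ, ‖w‖ ^ 2 ≤ z.re →
        ‖b₁ * z + b₂ * w + b₃ * z ^ 2 + b₄ * z * w + b₅ * w ^ 2‖ ^ 2 ≤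
          (a₁ * z + a₂ * w + a₃ * z ^ 2 + a₄ * z * w + a₅ * w ^ 2).re := fun z w hzw => by
      simpa only [hf] using norm_sq_le_re_of_mapsTo_siegel2 hcont h (Z := (z, w)) hzw
    obtain ⟨rfl, ha₁, rfl, rfl⟩ := coeffs_eq_zero_of_norm_sq_le_re_on_right_half_plane
      (a₁ := a₁) (b₃ := b₃) fun z hz => by simpa using hcl z 0 (by simpa using hz)
    obtain ⟨rfl, rfl, rfl, rfl⟩ := coeffs_eq_zero_of_norm_sq_le_re_on_closure_siegel2
      fun z w hzw => by simpa using hcl z w hzw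
    obtain ⟨u, hu, hu'⟩ := exists_norm_eq_one_re_mul_sq_eq_neg_norm a₅
    have hpos := h (1, 0) (by simp [siegel2])
    have hbound := hcl 1 u (by simp [hu])
    rw [hf] at hpos
    refine ⟨a₁.re, a₅, b₂, by simpa [siegel2] using hpos, ?_, fun z w => ?_⟩
    · simp only [mul_one, zero_add, one_pow, add_zero, zero_mul, norm_mul, hu, add_re, hu']
        at hbound
      linarith
    · rw [hf, show (a₁.re : ℂ) = a₁ from Complex.ext rfl (by simp [ha₁])]
      simp only [zero_mul, add_zero, zero_add]
  · rintro ⟨A, B, C, hA, hBC, hform⟩ ⟨z, w⟩ hZ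
    rw [hform]
    exact mapsTo_siegel2 hA hBC (x := (z, w)) hZ
end

section
/- Let H² = {(z,w) ∈ ℂ² : Re z > |w|²} and let f : ℂ² → ℂ², f(z,w) = (2z + w², w). Then: (a) f(H²) ⊆ H²; (b) for every r ∈ ℝ, the point (r², ir) satisfies Re(r²) = |ir|² (it lies on the boundary of H²) and f(r², ir) = (r², ir), so {(r², ir) : r ∈ ℝ} is a curve of boundary fixed points; (c) for every r ∈ ℝ, the map h_r(z,w) = (z + r² + 2irw, w − ir) is a bijection of ℂ² with inverse h_r^{-1}(z,w) = (z + r² − 2irw, w + ir), and h_r ∘ f ∘ h_r^{-1} = f; (d) the liminf of (Re(2z + w²) − |w|²)/(Re z − |w|²) as (z,w) → (0,0) within H² equals 2, i.e. the boundary dilatation coefficient of f at the origin is 2. -/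
noncomputable section

open Filter Topology

/-!
With the defining function `ρ(z,w) = Re z - |w|²` of `H²` one has
`ρ(f(z,w)) = 2ρ(z,w) + 2 (Re w)²`, so `f` maps `H²` into itself, the quotient
`ρ ∘ f / ρ` is at least `2` on `H²`, and it equals `2` on the real axis `w = 0`.
The maps `h_r` form a one-parameter group (`h_r ∘ h_s = h_{r+s}`) preserving `ρ`
and commuting with `f`; the curve `(r², ir)` is the orbit `h_{-r}(0,0)` of the fixed
boundary point `0`.
-/

theorem Filter.liminf_eq_of_eventually_ge_of_frequently_eq {α β : Type*}
    [ConditionallyCompleteLinearOrder β] {l : Filter α} {g : α → β} {a : β}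
    (hge : ∀ᶠ x in l, a ≤ g x) (hfreq : ∃ᶠ x in l, g x = a) : liminf g l = a := by
  have hle : ∃ᶠ x in l, g x ≤ a := hfreq.mono fun _ hx => hx.le
  exact le_antisymm (liminf_le_of_frequently_le hle ⟨a, hge⟩)
    (le_liminf_of_le (IsCoboundedUnder.of_frequently_le hle) hge)

def siegelDefect (Z : ℂ × ℂ) : ℝ := Z.1.re - ‖Z.2‖ ^ 2

def siegelMap (Z : ℂ × ℂ) : ℂ × ℂ := (2 * Z.1 + Z.2 ^ 2, Z.2)

def heisenbergShift (r : ℝ) (Z : ℂ × ℂ) : ℂ × ℂ :=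
  (Z.1 + ((r ^ 2 : ℝ) : ℂ) + 2 * Complex.I * (r : ℂ) * Z.2, Z.2 - Complex.I * (r : ℂ))

theorem mem_siegel2_iff {Z : ℂ × ℂ} : Z ∈ siegel2 ↔ 0 < siegelDefect Z := by
  rw [siegelDefect, sub_pos]
  rfl

theorem re_sq_add_norm_sq (w : ℂ) : (w ^ 2).re + ‖w‖ ^ 2 = 2 * w.re ^ 2 := by
  rw [Complex.sq_norm, Complex.normSq_apply, sq, Complex.mul_re]
  ring

theorem siegelDefect_siegelMap (Z : ℂ × ℂ) :
    siegelDefect (siegelMap Z) = 2 * siegelDefect Z + 2 * Z.2.re ^ 2 := by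
  have := re_sq_add_norm_sq Z.2
  simp only [siegelDefect, siegelMap, Complex.add_re, Complex.mul_re, Complex.re_ofNat,
    Complex.im_ofNat]
  linarith

theorem two_mul_siegelDefect_le (Z : ℂ × ℂ) :
    2 * siegelDefect Z ≤ siegelDefect (siegelMap Z) := by
  rw [siegelDefect_siegelMap]
  nlinarith [sq_nonneg Z.2.re]

theorem siegelMap_mem_siegel2 {Z : ℂ × ℂ} (hZ : Z ∈ siegel2) : siegelMap Z ∈ siegel2 := by
  rw [mem_siegel2_iff] at hZ ⊢
  linarith [two_mul_siegelDefect_le Z]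

theorem two_le_siegelDefect_siegelMap_div {Z : ℂ × ℂ} (hZ : Z ∈ siegel2) :
    2 ≤ siegelDefect (siegelMap Z) / siegelDefect Z := by
  rw [le_div_iff₀ (mem_siegel2_iff.mp hZ)]
  exact two_mul_siegelDefect_le Z

theorem siegelDefect_siegelMap_div_ofReal {t : ℝ} (ht : t ≠ 0) :
    siegelDefect (siegelMap ((t : ℂ), 0)) / siegelDefect ((t : ℂ), 0) = 2 := by
  rw [siegelDefect_siegelMap, div_eq_iff (by simpa [siegelDefect] using ht)]
  simp

theorem tendsto_ofReal_nhdsGT_nhdsWithin_siegel2 :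
    Tendsto (fun t : ℝ => ((t : ℂ), (0 : ℂ))) (𝓝[>] 0) (𝓝[siegel2] 0) := by
  refine tendsto_nhdsWithin_of_tendsto_nhds_of_eventually_within _ ?_ ?_
  · have : Tendsto (fun t : ℝ => ((t : ℂ), (0 : ℂ))) (𝓝 0) (𝓝 (0, 0)) :=
      (Complex.continuous_ofReal.tendsto 0).prodMk_nhds tendsto_const_nhds
    exact this.mono_left nhdsWithin_le_nhds
  · filter_upwards [self_mem_nhdsWithin] with t (ht : 0 < t)
    simpa [siegel2] using ht

theorem liminf_siegelDefect_siegelMap_div :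
    liminf (fun Z => siegelDefect (siegelMap Z) / siegelDefect Z) (𝓝[siegel2] 0) = 2 := by
  refine liminf_eq_of_eventually_ge_of_frequently_eq
    (eventually_nhdsWithin_of_forall fun _ => two_le_siegelDefect_siegelMap_div) ?_
  have h_axis : ∀ᶠ t : ℝ in 𝓝[>] 0,
      siegelDefect (siegelMap ((t : ℂ), 0)) / siegelDefect ((t : ℂ), 0) = 2 := by
    filter_upwards [self_mem_nhdsWithin] with t (ht : 0 < t)
    exact siegelDefect_siegelMap_div_ofReal ht.ne'
  exact tendsto_ofReal_nhdsGT_nhdsWithin_siegel2.frequently h_axis.frequently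

theorem heisenbergShift_zero (Z : ℂ × ℂ) : heisenbergShift 0 Z = Z := by
  simp [heisenbergShift]

theorem heisenbergShift_heisenbergShift (r s : ℝ) (Z : ℂ × ℂ) :
    heisenbergShift r (heisenbergShift s Z) = heisenbergShift (r + s) Z := by
  simp only [heisenbergShift, Prod.mk.injEq]
  push_cast
  exact ⟨by linear_combination (-2 * (r : ℂ) * s) * Complex.I_sq, by ring⟩

theorem leftInverse_heisenbergShift_neg (r : ℝ) :
    Function.LeftInverse (heisenbergShift (-r)) (heisenbergShift r) := fun Z => by
  rw [heisenbergShift_heisenbergShift, neg_add_cancel, heisenbergShift_zero]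

theorem siegelMap_heisenbergShift (r : ℝ) (Z : ℂ × ℂ) :
    siegelMap (heisenbergShift r Z) = heisenbergShift r (siegelMap Z) := by
  simp only [siegelMap, heisenbergShift, Prod.mk.injEq, and_true]
  push_cast
  linear_combination (r : ℂ) ^ 2 * Complex.I_sq

theorem siegelDefect_heisenbergShift (r : ℝ) (Z : ℂ × ℂ) :
    siegelDefect (heisenbergShift r Z) = siegelDefect Z := by
  simp only [siegelDefect, heisenbergShift, Complex.sq_norm, Complex.normSq_apply, Complex.add_re,
    Complex.sub_re, Complex.sub_im, Complex.mul_re, Complex.mul_im, Complex.ofReal_re,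
    Complex.ofReal_im, Complex.I_re, Complex.I_im, Complex.re_ofNat, Complex.im_ofNat]
  ring

theorem heisenbergShift_neg_zero (r : ℝ) :
    heisenbergShift (-r) 0 = (((r ^ 2 : ℝ) : ℂ), Complex.I * (r : ℂ)) := by
  simp [heisenbergShift]

/-- for `f(z,w) = (2z + w², w)`:
(a) `f(H²) ⊆ H²`;
(b) each point `(r², ir)`, `r ∈ ℝ`, lies on `∂H²` and is fixed by `f`;
(c) each translation `h_r(z,w) = (z + r² + 2irw, w − ir)` is a bijection of `ℂ²` with
inverse `h_r⁻¹(z,w) = (z + r² − 2irw, w + ir)` and `h_r ∘ f ∘ h_r⁻¹ = f`;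
(d) the boundary dilatation coefficient of `f` at the origin is `2`. -/
theorem stmt18 (f : ℂ × ℂ → ℂ × ℂ)
    (hf : ∀ z w : ℂ, f (z, w) = (2 * z + w ^ 2, w))
    (h h' : ℝ → ℂ × ℂ → ℂ × ℂ)
    (hh : ∀ (r : ℝ) (z w : ℂ), h r (z, w) =
      (z + ((r ^ 2 : ℝ) : ℂ) + 2 * Complex.I * (r : ℂ) * w, w - Complex.I * (r : ℂ)))
    (hh' : ∀ (r : ℝ) (z w : ℂ), h' r (z, w) =
      (z + ((r ^ 2 : ℝ) : ℂ) - 2 * Complex.I * (r : ℂ) * w, w + Complex.I * (r : ℂ))) :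
    (∀ Z ∈ siegel2, f Z ∈ siegel2) ∧
    (∀ r : ℝ, (((r ^ 2 : ℝ) : ℂ)).re = ‖Complex.I * (r : ℂ)‖ ^ 2 ∧
      f (((r ^ 2 : ℝ) : ℂ), Complex.I * (r : ℂ)) =
        (((r ^ 2 : ℝ) : ℂ), Complex.I * (r : ℂ))) ∧
    (∀ r : ℝ, Function.LeftInverse (h' r) (h r) ∧ Function.RightInverse (h' r) (h r) ∧
      ∀ Y : ℂ × ℂ, h r (f (h' r Y)) = f Y) ∧
    Filter.liminf
      (fun Y : ℂ × ℂ => ((2 * Y.1 + Y.2 ^ 2).re - ‖Y.2‖ ^ 2) / (Y.1.re - ‖Y.2‖ ^ 2))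
      (𝓝[siegel2] 0) = 2 := by
  obtain rfl : f = siegelMap := funext fun Z => hf Z.1 Z.2
  obtain rfl : h = heisenbergShift := funext fun r => funext fun Z => hh r Z.1 Z.2
  obtain rfl : h' = fun r => heisenbergShift (-r) := by
    refine funext fun r => funext fun Z => ?_
    rw [hh' r Z.1 Z.2]
    simp [heisenbergShift, sub_eq_add_neg]
  refine ⟨fun _ => siegelMap_mem_siegel2, fun r => ⟨?_, ?_⟩,
    fun r => ⟨leftInverse_heisenbergShift_neg r, ?_, fun Y => ?_⟩,
    liminf_siegelDefect_siegelMap_div⟩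
  · have := siegelDefect_heisenbergShift (-r) 0
    rw [heisenbergShift_neg_zero] at this
    simpa [siegelDefect, sub_eq_zero] using this
  · rw [← heisenbergShift_neg_zero, siegelMap_heisenbergShift]
    congr 1
    ext <;> simp [siegelMap]
  · have := leftInverse_heisenbergShift_neg (-r)
    rwa [neg_neg] at this
  · rw [siegelMap_heisenbergShift, heisenbergShift_heisenbergShift, add_neg_cancel,
      heisenbergShift_zero]
end
end
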